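/- arXiv:1802.04039 — 9 statements merged into one kernel-verified Lean document; each statement's English description precedes it below -/
import Mathlib

section
/- Let gamma ∈ (0,5), eps ∈ (0,1), 0 < s0 ≤ s1, and let phi : [s0,s1] → [0,∞) satisfy ∫_{s0}^{s1} s^gamma·phi(s) ds < ∞. Let b : [s0,s1] → ℝ be differentiable with |b'(s) + b(s)²| ≤ √(phi(s)) and (1-eps)/s ≤ b(s) ≤ (1+eps)/s for all s ∈ [s0,s1]. Then for all s ∈ [s0,s1]: |b(s) - 1/s| ≤ ((1+eps)/(1-eps))·|1/s0 - b(s0)|·s0²/s² + ((1+eps)/((1-eps)²·√(5-gamma)))·s^{(1-gamma)/2}·(∫_{s0}^{s1} t^gamma·phi(t) dt)^{1/2}. -/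
open Set MeasureTheory Filter
open scoped Topology

/-! The reciprocal `f = 1/b - s` linearises the Riccati equation: `f' = -(b' + b²)/b²`, so
`|f'| ≤ s² √φ / (1 - ε)²` by the lower bound on `b`. Writing `s² √φ = s^((4-γ)/2) · √(s^γ φ)`,
Cauchy–Schwarz bounds `∫ s² √φ` by `s^((5-γ)/2) / √(5-γ) · (∫ s^γ φ)^(1/2)`, which controls
`f(s) - f(s₀)`. Finally `b - 1/s = -f · b/s` with `b/s ≤ (1 + ε)/s²`, and
`|f(s₀)| ≤ s₀² |1/s₀ - b(s₀)| / (1 - ε)`. -/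
section CauchySchwarz

variable {α : Type*} [MeasurableSpace α] {μ : Measure α} {u g : α → ℝ}

theorem MeasureTheory.Integrable.memLp_two_sqrt (hg : Integrable g μ) :
    MemLp (fun x => √(g x)) 2 μ := by
  refine (memLp_two_iff_integrable_sq
    (Real.continuous_sqrt.comp_aestronglyMeasurable hg.aestronglyMeasurable)).2 ?_
  simp only [Real.sq_sqrt']
  exact hg.sup (integrable_zero α ℝ μ)

theorem MeasureTheory.MemLp.integrable_mul_sqrt (hu : MemLp u 2 μ) (hg : Integrable g μ) :
    Integrable (fun x => u x * √(g x)) μ :=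
  hu.integrable_mul hg.memLp_two_sqrt

theorem integral_mul_sqrt_le (hu0 : 0 ≤ᵐ[μ] u) (hu : MemLp u 2 μ) (hg0 : 0 ≤ᵐ[μ] g)
    (hg : Integrable g μ) :
    ∫ x, u x * √(g x) ∂μ ≤ √(∫ x, u x ^ 2 ∂μ) * √(∫ x, g x ∂μ) := by
  have holder := integral_mul_le_Lp_mul_Lq_of_nonneg Real.HolderConjugate.two_two hu0
    (.of_forall fun x => Real.sqrt_nonneg (g x)) (by simpa using hu)
    (by simpa using hg.memLp_two_sqrt)
  have hsq : ∫ x, √(g x) ^ 2 ∂μ = ∫ x, g x ∂μ := by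
    refine integral_congr_ae ?_
    filter_upwards [hg0] with x hx
    exact Real.sq_sqrt hx
  simpa only [Real.rpow_two, hsq, ← Real.sqrt_eq_rpow] using holder

end CauchySchwarz

theorem integral_rpow_le_of_nonneg {r a s : ℝ} (hr : -1 < r) (ha : 0 ≤ a) :
    ∫ t in a..s, t ^ r ≤ s ^ (r + 1) / (r + 1) := by
  rw [integral_rpow (.inl hr)]
  have : 0 ≤ a ^ (r + 1) := Real.rpow_nonneg ha _
  gcongr
  · linarith
  · linarith

theorem sq_mul_sqrt_eq_rpow_mul_sqrt {t : ℝ} (ht : 0 ≤ t) (γ x : ℝ) :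
    t ^ 2 * √x = t ^ ((4 - γ) / 2) * √(t ^ γ * x) := by
  rw [Real.sqrt_mul (Real.rpow_nonneg ht γ), Real.sqrt_eq_rpow (t ^ γ), ← Real.rpow_mul ht,
    ← mul_assoc, ← Real.rpow_add' ht (by ring_nf; norm_num),
    show (4 - γ) / 2 + γ * (1 / 2) = 2 by ring, Real.rpow_two]

section WeightedCauchySchwarz

variable {γ a s : ℝ} {φ : ℝ → ℝ}

theorem memLp_two_rpow_restrict_Ioc (ha : 0 < a) (p : ℝ) :
    MemLp (fun t : ℝ => t ^ p) 2 (volume.restrict (Ioc a s)) := by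
  have hcont : ContinuousOn (fun t : ℝ => t ^ p) (Icc a s) := fun t ht =>
    (Real.continuousAt_rpow_const t p (.inl (ha.trans_le ht.1).ne')).continuousWithinAt
  refine (memLp_two_iff_integrable_sq
    ((hcont.mono Ioc_subset_Icc_self).aestronglyMeasurable measurableSet_Ioc)).2 ?_
  exact ((hcont.pow 2).integrableOn_compact isCompact_Icc).mono_set Ioc_subset_Icc_self

theorem IntervalIntegrable.sq_mul_sqrt_of_rpow_mul (ha : 0 < a) (has : a ≤ s)
    (hint : IntervalIntegrable (fun t => t ^ γ * φ t) volume a s) :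
    IntervalIntegrable (fun t => t ^ 2 * √(φ t)) volume a s := by
  rw [intervalIntegrable_iff_integrableOn_Ioc_of_le has] at hint ⊢
  refine ((memLp_two_rpow_restrict_Ioc ha ((4 - γ) / 2)).integrable_mul_sqrt hint).congr ?_
  filter_upwards [ae_restrict_mem measurableSet_Ioc] with t ht
  exact (sq_mul_sqrt_eq_rpow_mul_sqrt (ha.le.trans ht.1.le) γ (φ t)).symm

theorem integral_sq_mul_sqrt_le (hγ : γ < 5) (ha : 0 < a) (has : a ≤ s)
    (hφ : ∀ t ∈ Ioc a s, 0 ≤ φ t) (hint : IntervalIntegrable (fun t => t ^ γ * φ t) volume a s) :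
    ∫ t in a..s, t ^ 2 * √(φ t) ≤ s ^ ((5 - γ) / 2) / √(5 - γ) * √(∫ t in a..s, t ^ γ * φ t) := by
  rw [intervalIntegrable_iff_integrableOn_Ioc_of_le has] at hint
  have hpos : ∀ᵐ t ∂volume.restrict (Ioc a s), 0 < t :=
    (ae_restrict_mem measurableSet_Ioc).mono fun t ht => ha.trans ht.1
  have hsplit : ∫ t in a..s, t ^ 2 * √(φ t) =
      ∫ t in Ioc a s, t ^ ((4 - γ) / 2) * √(t ^ γ * φ t) := by
    rw [intervalIntegral.integral_of_le has]
    refine integral_congr_ae ?_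
    filter_upwards [hpos] with t ht
    exact sq_mul_sqrt_eq_rpow_mul_sqrt ht.le γ (φ t)
  have hweight : √(∫ t in Ioc a s, (t ^ ((4 - γ) / 2)) ^ 2) ≤ s ^ ((5 - γ) / 2) / √(5 - γ) := by
    have hrpow : ∫ t in Ioc a s, (t ^ ((4 - γ) / 2)) ^ 2 = ∫ t in a..s, t ^ (4 - γ) := by
      rw [intervalIntegral.integral_of_le has]
      refine integral_congr_ae ?_
      filter_upwards [hpos] with t ht
      rw [← Real.rpow_natCast, ← Real.rpow_mul ht.le]
      ring_nf
    calc √(∫ t in Ioc a s, (t ^ ((4 - γ) / 2)) ^ 2)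
        ≤ √(s ^ (5 - γ) / (5 - γ)) := by
          have := integral_rpow_le_of_nonneg (s := s) (by linarith : -1 < 4 - γ) ha.le
          rw [show 4 - γ + 1 = 5 - γ by ring] at this
          exact Real.sqrt_le_sqrt (hrpow ▸ this)
      _ = s ^ ((5 - γ) / 2) / √(5 - γ) := by
          rw [Real.sqrt_div' _ (by linarith), Real.sqrt_eq_rpow, ← Real.rpow_mul (ha.le.trans has)]
          ring_nf
  calc ∫ t in a..s, t ^ 2 * √(φ t)
      = ∫ t in Ioc a s, t ^ ((4 - γ) / 2) * √(t ^ γ * φ t) := hsplit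
    _ ≤ √(∫ t in Ioc a s, (t ^ ((4 - γ) / 2)) ^ 2) * √(∫ t in Ioc a s, t ^ γ * φ t) := by
      refine integral_mul_sqrt_le ?_ (memLp_two_rpow_restrict_Ioc ha _) ?_ hint
      · filter_upwards [hpos] with t ht using Real.rpow_nonneg ht.le _
      · filter_upwards [ae_restrict_mem measurableSet_Ioc] with t ht
        exact mul_nonneg (Real.rpow_nonneg (ha.trans ht.1).le _) (hφ t ht)
    _ ≤ s ^ ((5 - γ) / 2) / √(5 - γ) * √(∫ t in a..s, t ^ γ * φ t) := by
      rw [intervalIntegral.integral_of_le has]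
      gcongr

end WeightedCauchySchwarz

theorem HasDerivAt.inv_sub_id {b : ℝ → ℝ} {d x : ℝ} (hb : HasDerivAt b d x) (hx : b x ≠ 0) :
    HasDerivAt (fun t => (b t)⁻¹ - t) (-(d + b x ^ 2) / b x ^ 2) x := by
  rw [show -(d + b x ^ 2) / b x ^ 2 = -d / b x ^ 2 - 1 by field_simp; ring]
  exact (hb.inv hx).sub (hasDerivAt_id x)

theorem abs_inv_sub_id_sub_le_integral {b b' φ : ℝ → ℝ} {c a s : ℝ} (hc : 0 < c) (ha : 0 < a)
    (has : a ≤ s) (hderiv : ∀ t ∈ Icc a s, HasDerivWithinAt b (b' t) (Icc a s) t)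
    (hlow : ∀ t ∈ Icc a s, c / t ≤ b t) (hb' : ∀ t ∈ Icc a s, |b' t + b t ^ 2| ≤ √(φ t))
    (hint : IntervalIntegrable (fun t => t ^ 2 * √(φ t)) volume a s) :
    |((b s)⁻¹ - s) - ((b a)⁻¹ - a)| ≤ (∫ t in a..s, t ^ 2 * √(φ t)) / c ^ 2 := by
  have hbpos : ∀ t ∈ Icc a s, 0 < b t := fun t ht =>
    (div_pos hc (ha.trans_le ht.1)).trans_le (hlow t ht)
  have hcont : ContinuousOn b (Icc a s) := fun t ht => (hderiv t ht).continuousWithinAt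
  have hd : ∀ t ∈ Ioo a s,
      HasDerivAt (fun t => (b t)⁻¹ - t) (-(b' t + b t ^ 2) / b t ^ 2) t := fun t ht =>
    ((hderiv t (Ioo_subset_Icc_self ht)).hasDerivAt (Icc_mem_nhds ht.1 ht.2)).inv_sub_id
      (hbpos t (Ioo_subset_Icc_self ht)).ne'
  rw [← intervalIntegral.integral_div, ← Real.norm_eq_abs]
  refine norm_sub_le_integral_of_norm_deriv_le_of_le (f := fun t => (b t)⁻¹ - t) has
    ((hcont.inv₀ fun t ht => (hbpos t ht).ne').sub continuousOn_id)
    (fun t ht => (hd t ht).differentiableAt.differentiableWithinAt)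
    (.of_forall fun t ht => ?_) (hint.div_const _)
  have ht0 : 0 < t := ha.trans ht.1
  have hb2 : (c / t) ^ 2 ≤ b t ^ 2 :=
    pow_le_pow_left₀ (div_pos hc ht0).le (hlow t (Ioo_subset_Icc_self ht)) 2
  rw [(hd t ht).deriv, Real.norm_eq_abs, abs_div, abs_neg,
    abs_of_pos (pow_pos (hbpos t (Ioo_subset_Icc_self ht)) 2)]
  calc |b' t + b t ^ 2| / b t ^ 2 ≤ √(φ t) / (c / t) ^ 2 :=
        div_le_div₀ (Real.sqrt_nonneg _) (hb' t (Ioo_subset_Icc_self ht)) (by positivity) hb2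
    _ = t ^ 2 * √(φ t) / c ^ 2 := by field_simp

theorem abs_sub_one_div_le {β s ε : ℝ} (hs : 0 < s) (hβ0 : 0 < β) (hβ : β ≤ (1 + ε) / s) :
    |β - 1 / s| ≤ (1 + ε) / s ^ 2 * |β⁻¹ - s| := by
  have hβs : β - 1 / s = -(β⁻¹ - s) * (β / s) := by field_simp; ring
  rw [hβs, abs_mul, abs_neg, abs_of_pos (div_pos hβ0 hs), mul_comm ((1 + ε) / s ^ 2)]
  refine mul_le_mul_of_nonneg_left ?_ (abs_nonneg _)
  calc β / s ≤ (1 + ε) / s / s := by gcongr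
    _ = (1 + ε) / s ^ 2 := by ring

theorem abs_inv_sub_le {β s ε : ℝ} (hs : 0 < s) (hε : ε < 1) (hβ : (1 - ε) / s ≤ β) :
    |β⁻¹ - s| ≤ s ^ 2 / (1 - ε) * |1 / s - β| := by
  have hε' : 0 < 1 - ε := by linarith
  have hβ0 : 0 < β := (div_pos hε' hs).trans_le hβ
  have hβs : β⁻¹ - s = s * (1 / s - β) / β := by field_simp
  rw [hβs, abs_div, abs_mul, abs_of_pos hs, abs_of_pos hβ0, div_le_iff₀ hβ0]
  calc s * |1 / s - β| = s ^ 2 / (1 - ε) * |1 / s - β| * ((1 - ε) / s) := by field_simp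
    _ ≤ s ^ 2 / (1 - ε) * |1 / s - β| * β := by gcongr

theorem abs_inv_sub_id_sub_le {b b' φ : ℝ → ℝ} {γ c a s : ℝ} (hγ : γ < 5) (hc : 0 < c)
    (ha : 0 < a) (has : a ≤ s) (hderiv : ∀ t ∈ Icc a s, HasDerivWithinAt b (b' t) (Icc a s) t)
    (hlow : ∀ t ∈ Icc a s, c / t ≤ b t) (hb' : ∀ t ∈ Icc a s, |b' t + b t ^ 2| ≤ √(φ t))
    (hφ : ∀ t ∈ Icc a s, 0 ≤ φ t) (hint : IntegrableOn (fun t => t ^ γ * φ t) (Icc a s)) :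
    |((b s)⁻¹ - s) - ((b a)⁻¹ - a)| ≤
      s ^ ((5 - γ) / 2) / √(5 - γ) * √(∫ t in a..s, t ^ γ * φ t) / c ^ 2 := by
  have hint' : IntervalIntegrable (fun t => t ^ γ * φ t) volume a s :=
    (intervalIntegrable_iff_integrableOn_Icc_of_le has).2 hint
  refine (abs_inv_sub_id_sub_le_integral hc ha has hderiv hlow hb'
    (hint'.sq_mul_sqrt_of_rpow_mul ha has)).trans ?_
  gcongr
  exact integral_sq_mul_sqrt_le hγ ha has (fun t ht => hφ t (Ioc_subset_Icc_self ht)) hint'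

theorem abs_sub_one_div_le_of_abs_inv_sub_sub_le {ε a s α β D : ℝ} (ha : 0 < a) (hs : 0 < s)
    (hε : ε < 1) (hα : (1 - ε) / a ≤ α) (hβ0 : 0 < β) (hβ : β ≤ (1 + ε) / s)
    (hD : |(β⁻¹ - s) - (α⁻¹ - a)| ≤ D) :
    |β - 1 / s| ≤ (1 + ε) / (1 - ε) * |1 / a - α| * a ^ 2 / s ^ 2 + (1 + ε) * D / s ^ 2 := by
  have hε' : 0 < 1 + ε := (div_pos_iff_of_pos_right hs).1 (hβ0.trans_le hβ)
  have hα' := abs_inv_sub_le ha hε hα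
  calc |β - 1 / s| ≤ (1 + ε) / s ^ 2 * |β⁻¹ - s| := abs_sub_one_div_le hs hβ0 hβ
    _ ≤ (1 + ε) / s ^ 2 * (a ^ 2 / (1 - ε) * |1 / a - α| + D) := by
      gcongr
      linarith [abs_sub_abs_le_abs_sub (β⁻¹ - s) (α⁻¹ - a)]
    _ = (1 + ε) / (1 - ε) * |1 / a - α| * a ^ 2 / s ^ 2 + (1 + ε) * D / s ^ 2 := by ring

/-- Estimate on the modulation rate `b`: if `b' + b²` is controlled pointwise by `√φ`
and `b` stays between `(1±ε)/s`, then `b(s)` is close to `1/s` with an explicit rate. -/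
theorem modulation_rate_estimate
    (gamma eps s0 s1 : ℝ) (phi b b' : ℝ → ℝ)
    (hgamma : gamma ∈ Ioo (0:ℝ) 5) (heps : eps ∈ Ioo (0:ℝ) 1)
    (hs0 : 0 < s0) (hs01 : s0 ≤ s1)
    (hphi : ∀ s ∈ Icc s0 s1, 0 ≤ phi s)
    (hint : IntegrableOn (fun s => s ^ gamma * phi s) (Icc s0 s1))
    (hderiv : ∀ s ∈ Icc s0 s1, HasDerivWithinAt b (b' s) (Icc s0 s1) s)
    (hb' : ∀ s ∈ Icc s0 s1, |b' s + b s ^ 2| ≤ Real.sqrt (phi s))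
    (hbound : ∀ s ∈ Icc s0 s1, (1 - eps) / s ≤ b s ∧ b s ≤ (1 + eps) / s) :
    ∀ s ∈ Icc s0 s1,
      |b s - 1 / s| ≤
        (1 + eps) / (1 - eps) * |1 / s0 - b s0| * s0 ^ 2 / s ^ 2 +
        (1 + eps) / ((1 - eps) ^ 2 * Real.sqrt (5 - gamma)) * s ^ ((1 - gamma) / 2) *
          Real.sqrt (∫ t in s0..s1, t ^ gamma * phi t) := by
  obtain ⟨-, hgamma5⟩ := hgamma
  obtain ⟨-, heps1⟩ := heps
  intro s hs
  have hs0s : 0 < s := hs0.trans_le hs.1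
  have hsub : Icc s0 s ⊆ Icc s0 s1 := Icc_subset_Icc_right hs.2
  have hdisp := abs_inv_sub_id_sub_le hgamma5 (sub_pos.2 heps1) hs0 hs.1
    (fun t ht => (hderiv t (hsub ht)).mono hsub) (fun t ht => (hbound t (hsub ht)).1)
    (fun t ht => hb' t (hsub ht)) (fun t ht => hphi t (hsub ht)) (hint.mono_set hsub)
  have hJ : ∫ t in s0..s, t ^ gamma * phi t ≤ ∫ t in s0..s1, t ^ gamma * phi t := by
    refine intervalIntegral.integral_mono_interval le_rfl hs.1 hs.2 ?_
      ((intervalIntegrable_iff_integrableOn_Icc_of_le hs01).2 hint)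
    filter_upwards [ae_restrict_mem measurableSet_Ioc] with t ht
    exact mul_nonneg (Real.rpow_nonneg (hs0.trans ht.1).le _) (hphi t (Ioc_subset_Icc_self ht))
  have hsplit : s ^ ((5 - gamma) / 2) = s ^ ((1 - gamma) / 2) * s ^ 2 := by
    rw [← Real.rpow_two, ← Real.rpow_add hs0s]
    ring_nf
  calc |b s - 1 / s|
    _ ≤ (1 + eps) / (1 - eps) * |1 / s0 - b s0| * s0 ^ 2 / s ^ 2 + (1 + eps) *
          (s ^ ((5 - gamma) / 2) / √(5 - gamma) * √(∫ t in s0..s1, t ^ gamma * phi t) /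
            (1 - eps) ^ 2) / s ^ 2 := by
      refine abs_sub_one_div_le_of_abs_inv_sub_sub_le hs0 hs0s heps1
        (hbound s0 ⟨le_rfl, hs01⟩).1 ((div_pos (sub_pos.2 heps1) hs0s).trans_le (hbound s hs).1)
        (hbound s hs).2 (hdisp.trans ?_)
      gcongr
    _ = _ := by
      rw [hsplit]
      field_simp
end

section
/- Let gamma ∈ (3,4). There exists a constant C̄ > 0 (depending only on gamma) such that the following holds. Let eps ∈ (0,1/50], s0 > 0, let phi : [s0,∞) → [0,∞) satisfy J := ∫_{s0}^∞ s^gamma·phi(s) ds < ∞, and let b : [s0,∞) → ℝ be differentiable with |b'(s)+b(s)²| ≤ √(phi(s)) and (1-eps)/s ≤ b(s) ≤ (1+eps)/s for all s ≥ s0. Define b̃ : [s0,∞) → ℝ as the solution of b̃' + b·b̃ = 0 with b̃(s0) = 1/s0. If s0 ≥ C̄·(J·eps^{-2})^{1/(gamma-3)}, then (1-2·eps)/s ≤ b̃(s) ≤ (1+2·eps)/s for all s ≥ s0. -/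
/-!
Write `u = 1/b` and `c = u(s0) - s0`. The hypothesis on `b' + b²` says `|u' - 1| ≤ u² √φ`, and
AM–GM gives `∫_{s0}^t x² √φ ≤ √J t^((5-γ)/2)`; so `u` stays within `O(√J t^((5-γ)/2))` of the
line `t + c`, and `|b(x) - 1/(x + c)| = O(√J x^((1-γ)/2))`. Because `γ > 3` this is integrable at
infinity, and `∫_{s0}^s b = log ((s + c)/(s0 + c)) + O(√J s0^((3-γ)/2))`, the error being at most
`ε/2` once `s0 ≥ C̄ (J/ε²)^(1/(γ-3))`. Finally `b̃(s) = exp(-∫_{s0}^s b) / s0`, and the main term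
`(s0 + c)/(s0 (s + c))` lies between `1/s` and `(s0 + c)/(s0 s)`, within a factor `1 ± ε` of `1/s`.
-/

open Set MeasureTheory Real

theorem abs_sub_le_integral_of_hasDerivWithinAt_Ioi {f f' g : ℝ → ℝ} {a b : ℝ} (hab : a ≤ b)
    (hcont : ContinuousOn f (Icc a b))
    (hderiv : ∀ x ∈ Ioo a b, HasDerivWithinAt f (f' x) (Ioi x) x)
    (hg : IntegrableOn g (Icc a b)) (hbound : ∀ x ∈ Ioo a b, |f' x| ≤ g x) :
    |f b - f a| ≤ ∫ x in a..b, g x := by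
  have hup := intervalIntegral.sub_le_integral_of_hasDeriv_right_of_le hab hcont hderiv hg
    fun x hx => (le_abs_self _).trans (hbound x hx)
  have hlow := intervalIntegral.sub_le_integral_of_hasDeriv_right_of_le hab hcont.neg
    (fun x hx => (hderiv x hx).neg) hg fun x hx => (neg_le_abs _).trans (hbound x hx)
  rw [abs_sub_le_iff]
  exact ⟨hup, by simp only [Pi.neg_apply] at hlow; linarith⟩

theorem eq_mul_exp_neg_integral_of_hasDerivWithinAt {y k : ℝ → ℝ} {a t : ℝ} (hat : a ≤ t)
    (hk : ContinuousOn k (Ici a))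
    (hy : ∀ x ∈ Ici a, HasDerivWithinAt y (-(k x * y x)) (Ici a) x) :
    y t = y a * exp (-∫ x in a..t, k x) := by
  set K : ℝ → ℝ := fun x => ∫ τ in a..x, k τ
  have hkint : ∀ x ∈ Ici a, IntervalIntegrable k volume a x := fun x hx =>
    (hk.mono (uIcc_of_le (mem_Ici.mp hx) ▸ Icc_subset_Ici_self)).intervalIntegrable
  have hK : ∀ x ∈ Ico a t, HasDerivWithinAt K (k x) (Ici x) x := fun x hx =>
    intervalIntegral.integral_hasDerivWithinAt_right (hkint x hx.1)
      ((hk.stronglyMeasurableAtFilter_nhdsWithin measurableSet_Ici x).filter_mono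
        (nhdsWithin_mono _ (Ioi_subset_Ici hx.1)))
      ((hk x hx.1).mono (Ioi_subset_Ici hx.1))
  have hKcont : ContinuousOn K (Icc a t) := by
    have := intervalIntegral.continuousOn_primitive_interval (μ := volume) (a := a) (b := t)
      ((hk.mono (uIcc_of_le hat ▸ Icc_subset_Ici_self)).integrableOn_compact isCompact_uIcc)
    rwa [uIcc_of_le hat] at this
  have hconst := constant_of_has_deriv_right_zero (f := fun x => y x * exp (K x))
    ((HasDerivWithinAt.continuousOn hy |>.mono Icc_subset_Ici_self).mul
      (continuous_exp.comp_continuousOn hKcont))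
    (fun x hx => (((hy x hx.1).mono (Ici_subset_Ici.mpr hx.1)).mul (hK x hx).exp).congr_deriv
      (by ring)) t (right_mem_Icc.mpr hat)
  have hKa : K a = 0 := intervalIntegral.integral_same
  simp only [hKa, exp_zero, mul_one] at hconst
  rw [← hconst, mul_assoc, ← exp_add, add_neg_cancel, exp_zero, mul_one]

theorem abs_inv_sub_sub_le_integral {b b' g : ℝ → ℝ} {a t : ℝ} (hat : a ≤ t)
    (hb : ∀ x ∈ Ici a, HasDerivWithinAt b (b' x) (Ici a) x) (hb0 : ∀ x ∈ Ici a, b x ≠ 0)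
    (hg : IntervalIntegrable g volume a t)
    (hbg : ∀ x ∈ Ioo a t, |b' x + b x ^ 2| ≤ b x ^ 2 * g x) :
    |((b t)⁻¹ - t) - ((b a)⁻¹ - a)| ≤ ∫ x in a..t, g x := by
  refine abs_sub_le_integral_of_hasDerivWithinAt_Ioi (f := fun x => (b x)⁻¹ - x) hat
    (((HasDerivWithinAt.continuousOn hb).inv₀ hb0).sub continuousOn_id
      |>.mono Icc_subset_Ici_self)
    (fun x hx => ((((hb x hx.1.le).hasDerivAt (Ici_mem_nhds hx.1)).inv (hb0 x hx.1.le)).sub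
      (hasDerivAt_id x)).hasDerivWithinAt)
    ((intervalIntegrable_iff_integrableOn_Icc_of_le hat).mp hg) fun x hx => ?_
  have hbx0 := hb0 x hx.1.le
  have hbx : 0 < b x ^ 2 := by positivity
  rw [show -b' x / b x ^ 2 - 1 = -((b' x + b x ^ 2) / b x ^ 2) by field_simp; ring, abs_neg,
    abs_div, abs_of_pos hbx, div_le_iff₀' hbx]
  exact hbg x hx

theorem two_mul_le_mul_sq_add_inv_mul_sq {A B θ : ℝ} (hθ : 0 < θ) :
    2 * (A * B) ≤ θ * A ^ 2 + θ⁻¹ * B ^ 2 := by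
  have hsq : θ * A ^ 2 + θ⁻¹ * B ^ 2 - 2 * (A * B) = (θ * A - B) ^ 2 / θ := by
    field_simp; ring
  linarith [div_nonneg (sq_nonneg (θ * A - B)) hθ.le]

theorem le_mul_sqrt_of_forall_le {X α B : ℝ} (hα : 0 < α) (hB : 0 ≤ B)
    (h : ∀ θ > 0, X ≤ (θ * α ^ 2 + θ⁻¹ * B) / 2) : X ≤ α * √B := by
  rcases hB.eq_or_lt with rfl | hB
  · rw [sqrt_zero, mul_zero]
    by_contra! hX
    have := h (X / α ^ 2) (by positivity)
    rw [mul_zero, add_zero, div_mul_cancel₀ _ (by positivity)] at this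
    linarith
  · convert h (√B / α) (by positivity) using 1
    field_simp
    rw [sq_sqrt hB.le]
    ring

theorem integral_rpow_le_rpow_add_one {p a t : ℝ} (hp : 0 ≤ p) (ha : 0 ≤ a) (hat : a ≤ t) :
    ∫ x in a..t, x ^ p ≤ t ^ (p + 1) := by
  rw [integral_rpow (Or.inl (by linarith))]
  have : 0 ≤ a ^ (p + 1) := by positivity
  rw [div_le_iff₀ (by linarith)]
  nlinarith [rpow_nonneg (ha.trans hat) (p + 1)]

theorem intervalIntegral_le_setIntegral_Ioi {f : ℝ → ℝ} {a t : ℝ} (hat : a ≤ t)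
    (hf : IntegrableOn f (Ioi a)) (hf0 : ∀ x ∈ Ioi a, 0 ≤ f x) :
    ∫ x in a..t, f x ≤ ∫ x in Ioi a, f x := by
  rw [intervalIntegral.integral_of_le hat]
  exact setIntegral_mono_set hf ((ae_restrict_iff' measurableSet_Ioi).mpr (ae_of_all _ hf0))
    Ioc_subset_Ioi_self.eventuallyLE

theorem integral_rpow_le_of_lt_neg_one {p a t : ℝ} (hp : p < -1) (ha : 0 < a) (hat : a ≤ t) :
    ∫ x in a..t, x ^ p ≤ -a ^ (p + 1) / (p + 1) := by
  rw [← integral_Ioi_rpow_of_lt hp ha]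
  exact intervalIntegral_le_setIntegral_Ioi hat (integrableOn_Ioi_rpow_of_lt hp ha)
    fun x hx => rpow_nonneg (ha.trans hx).le p

theorem sq_mul_sqrt_le {γ x φ θ : ℝ} (hx : 0 < x) (hφ : 0 ≤ φ) (hθ : 0 < θ) :
    x ^ 2 * √φ ≤ (θ * x ^ (4 - γ) + θ⁻¹ * (x ^ γ * φ)) / 2 := by
  have hA : (x ^ ((4 - γ) / 2)) ^ 2 = x ^ (4 - γ) := by
    rw [← rpow_natCast, ← rpow_mul hx.le]; norm_num
  have hB : (x ^ (γ / 2) * √φ) ^ 2 = x ^ γ * φ := by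
    rw [mul_pow, sq_sqrt hφ, ← rpow_natCast, ← rpow_mul hx.le]; norm_num
  have hAB : x ^ ((4 - γ) / 2) * (x ^ (γ / 2) * √φ) = x ^ 2 * √φ := by
    rw [← mul_assoc, ← rpow_add hx, show (4 - γ) / 2 + γ / 2 = ((2 : ℕ) : ℝ) by push_cast; ring,
      rpow_natCast]
  have := two_mul_le_mul_sq_add_inv_mul_sq (A := x ^ ((4 - γ) / 2)) (B := x ^ (γ / 2) * √φ) hθ
  rw [hA, hB, hAB] at this
  linarith

theorem sq_mul_abs_inv_sub_sub_le_of_pos {γ κ a t θ : ℝ} {φ b b' : ℝ → ℝ} (hγ : γ ≤ 4)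
    (hκ : 0 < κ) (ha : 0 < a) (hat : a ≤ t) (hθ : 0 < θ) (hφ : ∀ x ∈ Ici a, 0 ≤ φ x)
    (hint : IntegrableOn (fun x => x ^ γ * φ x) (Ioi a))
    (hb : ∀ x ∈ Ici a, HasDerivWithinAt b (b' x) (Ici a) x)
    (hbe : ∀ x ∈ Ici a, |b' x + b x ^ 2| ≤ √(φ x)) (hlow : ∀ x ∈ Ici a, κ / x ≤ b x) :
    κ ^ 2 * |((b t)⁻¹ - t) - ((b a)⁻¹ - a)| ≤
      (θ * t ^ (4 - γ + 1) + θ⁻¹ * ∫ x in Ioi a, x ^ γ * φ x) / 2 := by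
  have hpow : IntervalIntegrable (fun x => x ^ (4 - γ)) volume a t :=
    intervalIntegral.intervalIntegrable_rpow' (by linarith)
  have hJint : IntervalIntegrable (fun x => x ^ γ * φ x) volume a t :=
    (intervalIntegrable_iff_integrableOn_Ioc_of_le hat).mpr (hint.mono_set Ioc_subset_Ioi_self)
  set g := fun x => (θ * x ^ (4 - γ) + θ⁻¹ * (x ^ γ * φ x)) / 2
  have hbg : ∀ x ∈ Ioo a t, |b' x + b x ^ 2| ≤ b x ^ 2 * ((κ ^ 2)⁻¹ * g x) := by
    intro x hx
    have hx0 : 0 < x := ha.trans hx.1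
    have hxb : x⁻¹ ≤ b x / κ := by
      rw [le_div_iff₀ hκ, inv_mul_eq_div]; exact hlow x hx.1.le
    calc |b' x + b x ^ 2| ≤ √(φ x) := hbe x hx.1.le
      _ = x⁻¹ ^ 2 * (x ^ 2 * √(φ x)) := by field_simp
      _ ≤ (b x / κ) ^ 2 * g x := mul_le_mul (pow_le_pow_left₀ (by positivity) hxb 2)
          (sq_mul_sqrt_le hx0 (hφ x hx.1.le) hθ) (by positivity) (by positivity)
      _ = b x ^ 2 * ((κ ^ 2)⁻¹ * g x) := by ring
  have hdev := abs_inv_sub_sub_le_integral hat hb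
    (fun x hx => ((div_pos hκ (ha.trans_le hx)).trans_le (hlow x hx)).ne')
    ((((hpow.const_mul θ).add (hJint.const_mul θ⁻¹)).div_const 2).const_mul (κ ^ 2)⁻¹) hbg
  calc κ ^ 2 * |((b t)⁻¹ - t) - ((b a)⁻¹ - a)|
      ≤ κ ^ 2 * ∫ x in a..t, (κ ^ 2)⁻¹ * g x := by gcongr
    _ = (θ * (∫ x in a..t, x ^ (4 - γ)) + θ⁻¹ * ∫ x in a..t, x ^ γ * φ x) / 2 := by
      rw [intervalIntegral.integral_const_mul, mul_inv_cancel_left₀ (by positivity),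
        intervalIntegral.integral_div,
        intervalIntegral.integral_add (hpow.const_mul θ) (hJint.const_mul θ⁻¹),
        intervalIntegral.integral_const_mul, intervalIntegral.integral_const_mul]
    _ ≤ (θ * t ^ (4 - γ + 1) + θ⁻¹ * ∫ x in Ioi a, x ^ γ * φ x) / 2 := by
      gcongr
      · exact integral_rpow_le_rpow_add_one (by linarith) ha.le hat
      · exact intervalIntegral_le_setIntegral_Ioi hat hint fun x hx =>
          mul_nonneg (rpow_nonneg (ha.trans hx).le _) (hφ x (mem_Ici.mpr hx.le))

-- AM–GM with weight `θ` splits `x² √φ` into `x^(4-γ)`, integrable near `a`, and `x^γ φ`,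
-- integrable at infinity; the optimal weight balances the two terms.
theorem sq_mul_abs_inv_sub_sub_le {γ κ a t : ℝ} {φ b b' : ℝ → ℝ} (hγ : γ ≤ 4) (hκ : 0 < κ)
    (ha : 0 < a) (hat : a ≤ t) (hφ : ∀ x ∈ Ici a, 0 ≤ φ x)
    (hint : IntegrableOn (fun x => x ^ γ * φ x) (Ioi a))
    (hb : ∀ x ∈ Ici a, HasDerivWithinAt b (b' x) (Ici a) x)
    (hbe : ∀ x ∈ Ici a, |b' x + b x ^ 2| ≤ √(φ x)) (hlow : ∀ x ∈ Ici a, κ / x ≤ b x) :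
    κ ^ 2 * |((b t)⁻¹ - t) - ((b a)⁻¹ - a)| ≤
      t ^ ((5 - γ) / 2) * √(∫ x in Ioi a, x ^ γ * φ x) := by
  have ht2 : (t ^ ((5 - γ) / 2)) ^ 2 = t ^ (4 - γ + 1) := by
    rw [← rpow_natCast, ← rpow_mul (ha.trans_le hat).le]; ring_nf
  refine le_mul_sqrt_of_forall_le (rpow_pos_of_pos (ha.trans_le hat) _)
    (setIntegral_nonneg measurableSet_Ioi fun x hx =>
      mul_nonneg (rpow_nonneg (ha.trans hx).le _) (hφ x (mem_Ici.mpr hx.le))) fun θ hθ => ?_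
  rw [ht2]
  exact sq_mul_abs_inv_sub_sub_le_of_pos hγ hκ ha hat hθ hφ hint hb hbe hlow

theorem abs_sub_inv_le_of_abs_inv_sub_le {ε x β v D : ℝ} (hε : ε ∈ Ioc 0 (1 / 50)) (hx : 0 < x)
    (hβ : 0 < β) (hβx : β ≤ (1 + ε) / x) (hv : (1 - ε) * x ≤ v)
    (hdev : (1 - ε) ^ 2 * |β⁻¹ - v| ≤ D) : |β - v⁻¹| ≤ 2 * D / x ^ 2 := by
  obtain ⟨hε0, hε1⟩ := hε
  have hv0 : 0 < v := lt_of_lt_of_le (by nlinarith) hv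
  have hD : 0 ≤ D := le_trans (by positivity) hdev
  have hw : |β⁻¹ - v| ≤ D / (1 - ε) ^ 2 := by
    rw [le_div_iff₀ (by nlinarith)]; linarith
  calc |β - v⁻¹| = |β⁻¹ - v| * β / v := by
        rw [show β - v⁻¹ = -((β⁻¹ - v) * β / v) by field_simp; ring, abs_neg, abs_div, abs_mul,
          abs_of_pos hβ, abs_of_pos hv0]
    _ ≤ D / (1 - ε) ^ 2 * ((1 + ε) / x) / ((1 - ε) * x) := by
        gcongr
        nlinarith
    _ = (1 + ε) / (1 - ε) ^ 3 * (D / x ^ 2) := by field_simp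
    _ ≤ 2 * (D / x ^ 2) := by
        gcongr
        rw [div_le_iff₀ (by nlinarith)]
        nlinarith
    _ = 2 * D / x ^ 2 := by ring

theorem one_sub_mul_le_add_inv_sub {ε s0 x β : ℝ} (hε : 0 ≤ ε) (hs0 : 0 < s0) (hx : s0 ≤ x)
    (hβ : 0 < β) (hβs0 : β ≤ (1 + ε) / s0) : (1 - ε) * x ≤ x + (β⁻¹ - s0) := by
  have hu : s0 ≤ (1 + ε) * β⁻¹ := by
    rw [← div_eq_mul_inv, le_div_iff₀ hβ, mul_comm]
    rwa [le_div_iff₀ hs0] at hβs0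
  have hc : -(ε * s0) ≤ β⁻¹ - s0 := by
    rcases le_or_gt 0 (β⁻¹ - s0) with h | h <;> nlinarith
  nlinarith [mul_le_mul_of_nonneg_left hx hε]

theorem abs_sub_inv_add_le {γ ε s0 x : ℝ} {φ b b' : ℝ → ℝ} (hγ : γ ≤ 4)
    (hε : ε ∈ Ioc 0 (1 / 50)) (hs0 : 0 < s0) (hφ : ∀ s ∈ Ici s0, 0 ≤ φ s)
    (hint : IntegrableOn (fun s => s ^ γ * φ s) (Ioi s0))
    (hb : ∀ s ∈ Ici s0, HasDerivWithinAt b (b' s) (Ici s0) s)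
    (hbe : ∀ s ∈ Ici s0, |b' s + b s ^ 2| ≤ √(φ s))
    (hbb : ∀ s ∈ Ici s0, (1 - ε) / s ≤ b s ∧ b s ≤ (1 + ε) / s) (hx : s0 ≤ x) :
    |b x - (x + ((b s0)⁻¹ - s0))⁻¹| ≤
      2 * √(∫ s in Ioi s0, s ^ γ * φ s) * x ^ ((1 - γ) / 2) := by
  have hbpos : ∀ y ∈ Ici s0, 0 < b y := fun y hy =>
    (div_pos (by linarith [hε.2]) (hs0.trans_le hy)).trans_le (hbb y hy).1
  have hx0 : 0 < x := hs0.trans_le hx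
  have hA := sq_mul_abs_inv_sub_sub_le hγ (by linarith [hε.2]) hs0 hx hφ hint hb hbe
    fun y hy => (hbb y hy).1
  rw [sub_sub] at hA
  calc |b x - (x + ((b s0)⁻¹ - s0))⁻¹|
      ≤ 2 * (x ^ ((5 - γ) / 2) * √(∫ s in Ioi s0, s ^ γ * φ s)) / x ^ 2 :=
        abs_sub_inv_le_of_abs_inv_sub_le hε hx0 (hbpos x hx) (hbb x hx).2
          (one_sub_mul_le_add_inv_sub hε.1.le hs0 hx (hbpos s0 self_mem_Ici)
            (hbb s0 self_mem_Ici).2) hA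
    _ = 2 * √(∫ s in Ioi s0, s ^ γ * φ s) * x ^ ((1 - γ) / 2) := by
        rw [show x ^ ((5 - γ) / 2) = x ^ ((1 - γ) / 2) * x ^ 2 by
          rw [← rpow_natCast, ← rpow_add hx0]; push_cast; ring_nf]
        field_simp

theorem abs_integral_sub_log_le {γ ε s0 t : ℝ} {φ b b' : ℝ → ℝ} (hγ : γ ∈ Ioo 3 4)
    (hε : ε ∈ Ioc 0 (1 / 50)) (hs0 : 0 < s0) (hφ : ∀ s ∈ Ici s0, 0 ≤ φ s)
    (hint : IntegrableOn (fun s => s ^ γ * φ s) (Ioi s0))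
    (hb : ∀ s ∈ Ici s0, HasDerivWithinAt b (b' s) (Ici s0) s)
    (hbe : ∀ s ∈ Ici s0, |b' s + b s ^ 2| ≤ √(φ s))
    (hbb : ∀ s ∈ Ici s0, (1 - ε) / s ≤ b s ∧ b s ≤ (1 + ε) / s) (ht : s0 ≤ t) :
    |(∫ x in s0..t, b x) - log ((t + ((b s0)⁻¹ - s0)) / (b s0)⁻¹)| ≤
      4 / (γ - 3) * (√(∫ s in Ioi s0, s ^ γ * φ s) * s0 ^ ((3 - γ) / 2)) := by
  obtain ⟨hε0, hε1⟩ := hε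
  set c := (b s0)⁻¹ - s0
  set J := ∫ s in Ioi s0, s ^ γ * φ s
  have hxc : ∀ x ∈ Ici s0, 0 < x + c := fun x hx =>
    (mul_pos (by linarith) (hs0.trans_le hx)).trans_le <| one_sub_mul_le_add_inv_sub hε0.le hs0
      hx ((div_pos (by linarith) hs0).trans_le (hbb s0 self_mem_Ici).1) (hbb s0 self_mem_Ici).2
  have hbint : IntervalIntegrable b volume s0 t :=
    ((HasDerivWithinAt.continuousOn hb).mono Icc_subset_Ici_self).intervalIntegrable_of_Icc ht
  have hinvint : IntervalIntegrable (fun x => (x + c)⁻¹) volume s0 t :=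
    ((continuousOn_id.add continuousOn_const).inv₀ fun x hx => (hxc x hx.1).ne')
      |>.intervalIntegrable_of_Icc ht
  have hlog : ∫ x in s0..t, (x + c)⁻¹ = log ((t + c) / (b s0)⁻¹) := by
    rw [intervalIntegral.integral_comp_add_right (fun x => x⁻¹),
      integral_inv_of_pos (hxc s0 self_mem_Ici) (hxc t ht), show s0 + c = (b s0)⁻¹ by ring]
  have h3γ : 3 - γ ≠ 0 := by linarith [hγ.1]
  have hγ3 : γ - 3 ≠ 0 := by linarith [hγ.1]
  calc |(∫ x in s0..t, b x) - log ((t + c) / (b s0)⁻¹)|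
      = |∫ x in s0..t, b x - (x + c)⁻¹| := by
        rw [intervalIntegral.integral_sub hbint hinvint, hlog]
    _ ≤ ∫ x in s0..t, |b x - (x + c)⁻¹| := intervalIntegral.abs_integral_le_integral_abs ht
    _ ≤ ∫ x in s0..t, 2 * √J * x ^ ((1 - γ) / 2) :=
        intervalIntegral.integral_mono_on ht (hbint.sub hinvint).abs
          ((continuousOn_id.rpow_const fun x hx => Or.inl (hs0.trans_le hx.1).ne').const_mul _
            |>.intervalIntegrable_of_Icc ht)
          fun x hx => abs_sub_inv_add_le hγ.2.le ⟨hε0, hε1⟩ hs0 hφ hint hb hbe hbb hx.1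
    _ ≤ 2 * √J * (-s0 ^ ((1 - γ) / 2 + 1) / ((1 - γ) / 2 + 1)) := by
        rw [intervalIntegral.integral_const_mul]
        gcongr
        exact integral_rpow_le_of_lt_neg_one (by linarith [hγ.1]) hs0 ht
    _ = 4 / (γ - 3) * (√J * s0 ^ ((3 - γ) / 2)) := by
        rw [show (1 - γ) / 2 + 1 = (3 - γ) / 2 by ring]
        field_simp
        ring

theorem sqrt_mul_rpow_le_of_le {γ ε J s0 : ℝ} (hγ : 3 < γ) (hε : 0 < ε) (hJ : 0 ≤ J)
    (hs0 : 0 < s0) (h : (8 / (γ - 3)) ^ (2 / (γ - 3)) * (J / ε ^ 2) ^ (1 / (γ - 3)) ≤ s0) :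
    4 / (γ - 3) * (√J * s0 ^ ((3 - γ) / 2)) ≤ ε / 2 := by
  have hγ3 : 0 < γ - 3 := by linarith
  have key : 8 / (γ - 3) * (√J / ε) ≤ s0 ^ ((γ - 3) / 2) := by
    have := rpow_le_rpow (by positivity) h (by positivity : 0 ≤ (γ - 3) / 2)
    rwa [mul_rpow (by positivity) (by positivity), ← rpow_mul (by positivity),
      ← rpow_mul (by positivity), show 2 / (γ - 3) * ((γ - 3) / 2) = 1 by field_simp,
      show 1 / (γ - 3) * ((γ - 3) / 2) = 1 / 2 by field_simp, rpow_one, ← sqrt_eq_rpow,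
      sqrt_div hJ, sqrt_sq hε.le] at this
  have hP : 0 < s0 ^ ((γ - 3) / 2) := by positivity
  rw [show s0 ^ ((3 - γ) / 2) = (s0 ^ ((γ - 3) / 2))⁻¹ by rw [← rpow_neg hs0.le]; ring_nf,
    show 4 / (γ - 3) * (√J * (s0 ^ ((γ - 3) / 2))⁻¹)
      = 8 / (γ - 3) * (√J / ε) * (ε / 2) / s0 ^ ((γ - 3) / 2) by field_simp; ring,
    div_le_iff₀ hP, mul_comm (ε / 2)]
  gcongr

theorem exp_neg_div_mem_Icc {ε s0 s β L : ℝ} (hε : ε ∈ Ioc 0 (1 / 50)) (hs0 : 0 < s0)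
    (hs : s0 ≤ s) (hβ : (1 - ε) / s0 ≤ β ∧ β ≤ (1 + ε) / s0)
    (hL : |L - log ((s + (β⁻¹ - s0)) / β⁻¹)| ≤ ε / 2) :
    exp (-L) / s0 ∈ Icc ((1 - 2 * ε) / s) ((1 + 2 * ε) / s) := by
  obtain ⟨hε0, hε1⟩ := hε
  have hs' : 0 < s := hs0.trans_le hs
  have hβ0 : 0 < β := (div_pos (by linarith) hs0).trans_le hβ.1
  set p := β⁻¹
  have hp : 0 < p := inv_pos.mpr hβ0
  have hp1 : s0 ≤ (1 + ε) * p := by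
    have := hβ.2; rw [le_div_iff₀ hs0] at this
    calc s0 = β * s0 * p := by rw [mul_right_comm, mul_inv_cancel₀ hβ0.ne', one_mul]
      _ ≤ (1 + ε) * p := by gcongr
  have hp2 : (1 - ε) * p ≤ s0 := by
    have := hβ.1; rw [div_le_iff₀ hs0] at this
    calc (1 - ε) * p ≤ β * s0 * p := by gcongr
      _ = s0 := by rw [mul_right_comm, mul_inv_cancel₀ hβ0.ne', one_mul]
  set q := s + (p - s0)
  have hq : 0 < q := by simp only [q]; linarith
  -- `s * p / (s0 * q)` lies between `1` and `p / s0`.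
  have hr1 : s0 * q ≤ (1 + ε) * (s * p) := by
    rcases le_total s0 p with h | h <;>
      nlinarith [mul_le_mul_of_nonneg_left h (sub_nonneg.mpr hs)]
  have hr2 : (1 - ε) * (s * p) ≤ s0 * q := by
    rcases le_total s0 p with h | h <;>
      nlinarith [mul_le_mul_of_nonneg_left h (sub_nonneg.mpr hs)]
  set E := L - log (q / p)
  obtain ⟨hE1, hE2⟩ := abs_le.mp hL
  have hexp : exp (-L) = p / q * exp (-E) := by
    rw [show -L = -log (q / p) + -E by ring, exp_add, exp_neg, exp_log (by positivity), inv_div]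
  have hlow : 1 - ε / 2 ≤ exp (-E) := by linarith [add_one_le_exp (-E)]
  have hup : exp (-E) * (1 - ε / 2) ≤ 1 := by
    calc exp (-E) * (1 - ε / 2) ≤ exp (-E) * exp E := by gcongr; linarith [add_one_le_exp E]
      _ = 1 := by rw [← exp_add, neg_add_cancel, exp_zero]
  rw [hexp, show p / q * exp (-E) / s0 = p * exp (-E) / (q * s0) by field_simp]
  constructor
  · rw [div_le_div_iff₀ hs' (by positivity)]
    calc (1 - 2 * ε) * (q * s0) ≤ (1 - 2 * ε) * ((1 + ε) * (s * p)) := by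
          rw [mul_comm q]; gcongr; linarith
      _ ≤ (1 - ε / 2) * (s * p) := by
          rw [← mul_assoc]; gcongr; nlinarith
      _ ≤ exp (-E) * (s * p) := by gcongr
      _ = p * exp (-E) * s := by ring
  · rw [div_le_div_iff₀ (by positivity) hs']
    calc p * exp (-E) * s ≤ exp (-E) * (s * p) * ((1 + 2 * ε) * (1 - ε) * (1 - ε / 2)) := by
          rw [mul_comm p, mul_assoc, mul_comm p]
          refine le_mul_of_one_le_right (by positivity) ?_
          nlinarith [mul_nonneg hε0.le (by nlinarith : (0 : ℝ) ≤ 1 / 2 - 5 / 2 * ε + ε ^ 2)]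
      _ = (1 + 2 * ε) * ((1 - ε) * (s * p)) * (exp (-E) * (1 - ε / 2)) := by ring
      _ ≤ (1 + 2 * ε) * (s0 * q) * 1 := by
          gcongr
          exact mul_nonneg (exp_pos _).le (by linarith)
      _ = (1 + 2 * ε) * (q * s0) := by ring

/-- The regularized modulation rate `b̃`, solving `b̃' = -b·b̃` with `b̃(s0) = 1/s0`,
satisfies `(1-2ε)/s ≤ b̃(s) ≤ (1+2ε)/s` provided `s0` is large enough. -/
theorem regularized_modulation_rate (gamma : ℝ) (hgamma : gamma ∈ Ioo (3:ℝ) 4) :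
    ∃ Cbar : ℝ, 0 < Cbar ∧
      ∀ (eps s0 : ℝ) (phi b b' btil : ℝ → ℝ),
        eps ∈ Ioc (0:ℝ) (1/50) → 0 < s0 →
        (∀ s ∈ Ici s0, 0 ≤ phi s) →
        IntegrableOn (fun s => s ^ gamma * phi s) (Ioi s0) →
        (∀ s ∈ Ici s0, HasDerivWithinAt b (b' s) (Ici s0) s) →
        (∀ s ∈ Ici s0, |b' s + b s ^ 2| ≤ Real.sqrt (phi s)) →
        (∀ s ∈ Ici s0, (1 - eps) / s ≤ b s ∧ b s ≤ (1 + eps) / s) →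
        (∀ s ∈ Ici s0, HasDerivWithinAt btil (-(b s * btil s)) (Ici s0) s) →
        btil s0 = 1 / s0 →
        Cbar * ((∫ s in Ioi s0, s ^ gamma * phi s) / eps ^ 2) ^ (1 / (gamma - 3)) ≤ s0 →
        ∀ s ∈ Ici s0, (1 - 2 * eps) / s ≤ btil s ∧ btil s ≤ (1 + 2 * eps) / s := by
  refine ⟨(8 / (gamma - 3)) ^ (2 / (gamma - 3)),
    rpow_pos_of_pos (div_pos (by norm_num) (sub_pos.mpr hgamma.1)) _, ?_⟩
  intro eps s0 phi b b' btil heps hs0 hphi hint hb hbe hbb hbtil hbtil0 hlarge s hs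
  have hJ : 0 ≤ ∫ s in Ioi s0, s ^ gamma * phi s := setIntegral_nonneg measurableSet_Ioi
    fun x hx => mul_nonneg (rpow_nonneg (hs0.trans hx).le _) (hphi x (mem_Ici.mpr hx.le))
  have hphase := (abs_integral_sub_log_le hgamma heps hs0 hphi hint hb hbe hbb hs).trans
    (sqrt_mul_rpow_le_of_le hgamma.1 heps.1 hJ hs0 hlarge)
  rw [eq_mul_exp_neg_integral_of_hasDerivWithinAt hs (HasDerivWithinAt.continuousOn hb) hbtil,
    hbtil0, one_div_mul_eq_div]
  exact exp_neg_div_mem_Icc heps hs0 hs (hbb s0 self_mem_Ici) hphase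
end

section
/- There exists a universal constant C̄ > 0 such that for every a ∈ (0,1), every L ≥ 1, and every f ∈ C^1([0,L]): |f(0)|² ≤ C̄·( L^{1+a}·∫_0^L (f'(Y))²·Y^{-a} dY + L^{-(3-a)}·∫_0^L f(Y)²·(Y+Y²)·Y^{-a} dY ). -/
open Set MeasureTheory Filter
open scoped Topology

/-!
For `Y ∈ (L/2, L]` write `f 0 = f Y - ∫₀^Y f'`. Cauchy–Schwarz against the weight `s^a` bounds
`(∫₀^Y f')²` by `L^(1+a) ∫₀^L f'² s^(-a)`. On `(L/2, L]` the weight `(Y + Y²) Y^(-a)` is at least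
`L^(2-a)/4`, so at a point `Y` where `f² (Y + Y²) Y^(-a)` does not exceed its mean over `(L/2, L]`
we get `f(Y)² ≤ 8 L^(-(3-a)) ∫₀^L f² (Y + Y²) Y^(-a)`.
-/

open intervalIntegral

theorem sq_integral_mul_le_integral_sq_mul_integral_sq {α : Type*} [MeasurableSpace α]
    {μ : Measure α} {u v : α → ℝ} (hu : Integrable (fun x ↦ u x ^ 2) μ)
    (hv : Integrable (fun x ↦ v x ^ 2) μ) (huv : Integrable (fun x ↦ u x * v x) μ) :
    (∫ x, u x * v x ∂μ) ^ 2 ≤ (∫ x, u x ^ 2 ∂μ) * ∫ x, v x ^ 2 ∂μ := by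
  have h_quadratic : ∀ t : ℝ, 0 ≤ (∫ x, v x ^ 2 ∂μ) * (t * t)
      + (-2 * ∫ x, u x * v x ∂μ) * t + ∫ x, u x ^ 2 ∂μ := by
    intro t
    have h_expand : (fun x ↦ (u x - t * v x) ^ 2)
        = fun x ↦ u x ^ 2 + ((-2 * t) * (u x * v x) + (t * t) * v x ^ 2) := by
      funext x; ring
    have h_cross : Integrable (fun x ↦ (-2 * t) * (u x * v x) + (t * t) * v x ^ 2) μ :=
      (huv.const_mul _).add (hv.const_mul _)
    have h_nonneg : 0 ≤ ∫ x, (u x - t * v x) ^ 2 ∂μ := integral_nonneg fun x ↦ sq_nonneg _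
    rw [h_expand, integral_add hu h_cross,
      integral_add (huv.const_mul _) (hv.const_mul _), MeasureTheory.integral_const_mul,
      MeasureTheory.integral_const_mul] at h_nonneg
    linarith
  have := discrim_le_zero h_quadratic
  rw [discrim] at this
  linarith

theorem sq_integral_le_integral_sq_div_mul_integral {α : Type*} [MeasurableSpace α]
    {μ : Measure α} {g w : α → ℝ} (hw : ∀ᵐ x ∂μ, 0 < w x) (hg : Integrable g μ)
    (hgw : Integrable (fun x ↦ g x ^ 2 / w x) μ) (hw_int : Integrable w μ) :
    (∫ x, g x ∂μ) ^ 2 ≤ (∫ x, g x ^ 2 / w x ∂μ) * ∫ x, w x ∂μ := by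
  have h_prod : (fun x ↦ g x / √(w x) * √(w x)) =ᵐ[μ] g := by
    filter_upwards [hw] with x hx
    exact div_mul_cancel₀ _ (Real.sqrt_ne_zero'.2 hx)
  have h_left : (fun x ↦ (g x / √(w x)) ^ 2) =ᵐ[μ] fun x ↦ g x ^ 2 / w x := by
    filter_upwards [hw] with x hx
    rw [div_pow, Real.sq_sqrt hx.le]
  have h_right : (fun x ↦ √(w x) ^ 2) =ᵐ[μ] w := by
    filter_upwards [hw] with x hx
    exact Real.sq_sqrt hx.le
  have := sq_integral_mul_le_integral_sq_mul_integral_sq (hgw.congr h_left.symm)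
    (hw_int.congr h_right.symm) (hg.congr h_prod.symm)
  rwa [integral_congr_ae h_prod, integral_congr_ae h_left, integral_congr_ae h_right] at this

theorem ContinuousOn.intervalIntegrable_mul_rpow_neg {h : ℝ → ℝ} {a L : ℝ} (ha : a < 1)
    (hh : ContinuousOn h (Icc 0 L)) (hL : 0 ≤ L) :
    IntervalIntegrable (fun s ↦ h s * s ^ (-a)) volume 0 L :=
  (intervalIntegrable_rpow' (by linarith)).continuousOn_mul (by rwa [uIcc_of_le hL])

theorem sq_intervalIntegral_le_rpow_mul_integral_sq_mul_rpow_neg {g : ℝ → ℝ} {a Y L : ℝ}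
    (ha₀ : 0 ≤ a) (ha₁ : a < 1) (hY : Y ∈ Icc 0 L) (hg : ContinuousOn g (Icc 0 L)) :
    (∫ s in 0..Y, g s) ^ 2 ≤ L ^ (1 + a) * ∫ s in 0..L, g s ^ 2 * s ^ (-a) := by
  have hsub : Ioc 0 Y ⊆ Ioc 0 L := Ioc_subset_Ioc le_rfl hY.2
  have hw_int : IntervalIntegrable (fun s ↦ g s ^ 2 * s ^ (-a)) volume 0 L :=
    (hg.pow 2).intervalIntegrable_mul_rpow_neg ha₁ (hY.1.trans hY.2)
  have h_weight : EqOn (fun s ↦ g s ^ 2 * s ^ (-a)) (fun s ↦ g s ^ 2 / s ^ a) (Ioc 0 Y) :=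
    fun s hs ↦ by simp only [Real.rpow_neg hs.1.le, div_eq_mul_inv]
  have h_cs := sq_integral_le_integral_sq_div_mul_integral (μ := volume.restrict (Ioc 0 Y))
    ((ae_restrict_mem measurableSet_Ioc).mono fun s hs ↦ Real.rpow_pos_of_pos hs.1 a)
    ((hg.intervalIntegrable_of_Icc (hY.1.trans hY.2)).1.mono_set hsub)
    ((hw_int.1.mono_set hsub).congr_fun h_weight measurableSet_Ioc)
    ((intervalIntegrable_rpow' (by linarith)).1.mono_set hsub)
  rw [← setIntegral_congr_fun measurableSet_Ioc h_weight, ← integral_of_le hY.1,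
    ← integral_of_le hY.1, ← integral_of_le hY.1, integral_rpow (Or.inl (by linarith)),
    Real.zero_rpow (by linarith), sub_zero] at h_cs
  have h_rpow : Y ^ (a + 1) / (a + 1) ≤ L ^ (1 + a) := by
    rw [add_comm a]
    exact (div_le_self (Real.rpow_nonneg hY.1 _) (by linarith)).trans
      (Real.rpow_le_rpow hY.1 hY.2 (by linarith))
  have h_mono : ∫ s in 0..Y, g s ^ 2 * s ^ (-a) ≤ ∫ s in 0..L, g s ^ 2 * s ^ (-a) :=
    integral_mono_interval le_rfl hY.1 hY.2
      ((ae_restrict_mem measurableSet_Ioc).mono fun s hs ↦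
        mul_nonneg (sq_nonneg _) (Real.rpow_nonneg hs.1.le _)) hw_int
  calc (∫ s in 0..Y, g s) ^ 2
      ≤ (∫ s in 0..Y, g s ^ 2 * s ^ (-a)) * (Y ^ (a + 1) / (a + 1)) := h_cs
    _ ≤ (∫ s in 0..L, g s ^ 2 * s ^ (-a)) * L ^ (1 + a) :=
        mul_le_mul h_mono h_rpow (div_nonneg (Real.rpow_nonneg hY.1 _) (by linarith))
          (integral_nonneg (hY.1.trans hY.2) fun s hs ↦
            mul_nonneg (sq_nonneg _) (Real.rpow_nonneg hs.1 _))
    _ = L ^ (1 + a) * ∫ s in 0..L, g s ^ 2 * s ^ (-a) := mul_comm _ _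

theorem integral_derivWithin_Icc_of_contDiffOn_Icc_of_mem {f : ℝ → ℝ} {a b x : ℝ} (hab : a < b)
    (hf : ContDiffOn ℝ 1 f (Icc a b)) (hx : x ∈ Icc a b) :
    ∫ y in a..x, derivWithin f (Icc a b) y = f x - f a := by
  have hsub : Icc a x ⊆ Icc a b := Icc_subset_Icc le_rfl hx.2
  refine integral_eq_sub_of_hasDeriv_right_of_le hx.1 (hf.continuousOn.mono hsub)
    (fun y hy ↦ ?_) (((hf.continuousOn_derivWithin (uniqueDiffOn_Icc hab) le_rfl).mono
      hsub).intervalIntegrable_of_Icc hx.1)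
  have h_nhds : Icc a b ∈ 𝓝 y := Icc_mem_nhds hy.1 (hy.2.trans_le hx.2)
  exact ((hf.differentiableOn one_ne_zero y (mem_of_mem_nhds h_nhds)).hasDerivWithinAt.hasDerivAt
    h_nhds).hasDerivWithinAt

theorem rpow_le_four_mul_add_sq_mul_rpow_neg {a L Y : ℝ} (ha₀ : 0 ≤ a) (ha₂ : a ≤ 2)
    (hL : 0 < L) (hY : L / 2 ≤ Y) :
    L ^ (2 - a) ≤ 4 * ((Y + Y ^ 2) * Y ^ (-a)) := by
  have hY₀ : 0 < Y := by linarith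
  calc L ^ (2 - a) = 2 ^ (2 - a) * (L / 2) ^ (2 - a) := by
        rw [← Real.mul_rpow zero_le_two (by linarith), mul_div_cancel₀ L two_ne_zero]
    _ ≤ 4 * Y ^ (2 - a) := by
        gcongr
        calc (2 : ℝ) ^ (2 - a) ≤ 2 ^ (2 : ℝ) :=
              Real.rpow_le_rpow_of_exponent_le one_le_two (by linarith)
          _ = 4 := by norm_num
    _ = 4 * (Y ^ 2 * Y ^ (-a)) := by
        rw [sub_eq_add_neg, Real.rpow_add hY₀, Real.rpow_two]
    _ ≤ 4 * ((Y + Y ^ 2) * Y ^ (-a)) := by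
        gcongr
        linarith

theorem exists_le_intervalIntegral_div {φ : ℝ → ℝ} {b c : ℝ} (hbc : b < c)
    (hφ : IntervalIntegrable φ volume b c) :
    ∃ y ∈ Ioc b c, φ y ≤ (∫ x in b..c, φ x) / (c - b) := by
  rw [← interval_average_eq_div, ← uIoc_of_le hbc.le]
  refine exists_le_setAverage ?_ ?_ (uIoc_of_le hbc.le ▸ hφ.1)
  all_goals simp [uIoc_of_le hbc.le, hbc]

theorem exists_mem_Ioc_sq_le_rpow_mul_integral {f : ℝ → ℝ} {a L : ℝ} (ha₀ : 0 ≤ a)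
    (ha₁ : a < 1) (hL : 0 < L) (hf : ContinuousOn f (Icc 0 L)) :
    ∃ Y ∈ Ioc (L / 2) L,
      f Y ^ 2 ≤ 8 * L ^ (-(3 - a)) * ∫ s in 0..L, f s ^ 2 * (s + s ^ 2) * s ^ (-a) := by
  have hw : IntervalIntegrable (fun s ↦ f s ^ 2 * (s + s ^ 2) * s ^ (-a)) volume 0 L :=
    ((hf.pow 2).mul (continuousOn_id.add (continuousOn_id.pow 2))).intervalIntegrable_mul_rpow_neg
      ha₁ hL.le
  have h_half : L / 2 ≤ L := half_le_self hL.le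
  obtain ⟨Y, hY, hY_le⟩ := exists_le_intervalIntegral_div (half_lt_self hL)
    (hw.mono_set (by
      rw [uIcc_of_le h_half, uIcc_of_le hL.le]
      exact Icc_subset_Icc (by positivity) le_rfl))
  refine ⟨Y, hY, ?_⟩
  have h_tail : ∫ s in L / 2..L, f s ^ 2 * (s + s ^ 2) * s ^ (-a)
      ≤ ∫ s in 0..L, f s ^ 2 * (s + s ^ 2) * s ^ (-a) :=
    integral_mono_interval (by positivity) h_half le_rfl
      ((ae_restrict_mem measurableSet_Ioc).mono fun s hs ↦ by
        have := hs.1.le; positivity) hw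
  have h_weight := rpow_le_four_mul_add_sq_mul_rpow_neg ha₀ (by linarith) hL hY.1.le
  have h_pow : L ^ (-(3 - a)) * L * L ^ (2 - a) = 1 := by
    rw [mul_assoc, ← Real.rpow_one_add' hL.le (by linarith), ← Real.rpow_add hL,
      show -(3 - a) + (1 + (2 - a)) = 0 by ring, Real.rpow_zero]
  have h_coef : 0 ≤ L ^ (-(3 - a)) * L := mul_nonneg (Real.rpow_nonneg hL.le _) hL.le
  calc f Y ^ 2 = L ^ (-(3 - a)) * L * (L ^ (2 - a) * f Y ^ 2) := by
        rw [← mul_assoc, h_pow, one_mul]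
    _ ≤ L ^ (-(3 - a)) * L * (4 * (f Y ^ 2 * (Y + Y ^ 2) * Y ^ (-a))) := by
        refine mul_le_mul_of_nonneg_left ?_ h_coef
        nlinarith [mul_le_mul_of_nonneg_right h_weight (sq_nonneg (f Y))]
    _ ≤ L ^ (-(3 - a)) * L *
        (4 * ((∫ s in 0..L, f s ^ 2 * (s + s ^ 2) * s ^ (-a)) / (L - L / 2))) := by
        gcongr
        exact hY_le.trans (div_le_div_of_nonneg_right h_tail (by linarith))
    _ = 8 * L ^ (-(3 - a)) * ∫ s in 0..L, f s ^ 2 * (s + s ^ 2) * s ^ (-a) := by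
        field_simp
        ring

theorem sq_sub_le_rpow_mul_integral_derivWithin_sq {f : ℝ → ℝ} {a L Y : ℝ} (ha₀ : 0 ≤ a)
    (ha₁ : a < 1) (hL : 0 < L) (hf : ContDiffOn ℝ 1 f (Icc 0 L)) (hY : Y ∈ Icc 0 L) :
    (f Y - f 0) ^ 2 ≤ L ^ (1 + a) * ∫ s in 0..L, derivWithin f (Icc 0 L) s ^ 2 * s ^ (-a) := by
  rw [← integral_derivWithin_Icc_of_contDiffOn_Icc_of_mem hL hf hY]
  exact sq_intervalIntegral_le_rpow_mul_integral_sq_mul_rpow_neg ha₀ ha₁ hY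
    (hf.continuousOn_derivWithin (uniqueDiffOn_Icc hL) le_rfl)

/-- Weighted trace inequality: `|f(0)|²` is controlled by weighted `L²` norms of `f'`
(weight `Y^{-a}`) and of `f` (weight `(Y+Y²)·Y^{-a}`) on `[0,L]`. -/
theorem trace_inequality :
    ∃ Cbar : ℝ, 0 < Cbar ∧
      ∀ a ∈ Ioo (0:ℝ) 1, ∀ L : ℝ, 1 ≤ L → ∀ f : ℝ → ℝ,
        ContDiffOn ℝ 1 f (Icc 0 L) →
        |f 0| ^ 2 ≤
          Cbar * (L ^ (1 + a) * (∫ Y in (0:ℝ)..L, (derivWithin f (Icc 0 L) Y) ^ 2 * Y ^ (-a))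
            + L ^ (-(3 - a)) * ∫ Y in (0:ℝ)..L, (f Y) ^ 2 * (Y + Y ^ 2) * Y ^ (-a)) := by
  refine ⟨16, by norm_num, ?_⟩
  rintro a ⟨ha₀, ha₁⟩ L hL f hf
  have hL₀ : 0 < L := by linarith
  obtain ⟨Y, hY, hfY⟩ := exists_mem_Ioc_sq_le_rpow_mul_integral ha₀.le ha₁ hL₀ hf.continuousOn
  have hf_diff := sq_sub_le_rpow_mul_integral_derivWithin_sq ha₀.le ha₁ hL₀ hf
    ⟨by linarith [hY.1], hY.2⟩
  have h_split : f 0 ^ 2 ≤ 2 * f Y ^ 2 + 2 * (f Y - f 0) ^ 2 := by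
    linarith [sq_nonneg (2 * f Y - f 0)]
  rw [sq_abs]
  linarith [sq_nonneg (f Y - f 0)]
end

section
/- For a ∈ (0,1) and mu ∈ (0,1), define C̄(a,mu) := 4·sup_{r>0} ( ∫_r^∞ Y^{-a}·(mu·Y + Y²/2)^{-2} dY )·( ∫_0^r Y^{a}·(Y + Y²/2) dY ). Then there exist universal constants ā > 0 and mu0 ∈ (0,1) such that for all a ∈ (0,ā) and all mu ∈ (mu0,1): C̄(a,mu) ≤ 9/10. -/
open Set MeasureTheory Filter
open scoped Topology

/-!
On `(r, ∞)` bound `Y ^ (-a)` by `r ^ (-a)` and on `(0, r)` bound `Y ^ a` by `r ^ a`, so the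
powers of `r` cancel. For `μ ≤ 1`, `μY + Y²/2 ≥ μ (Y + Y²/2)`, and the kernel
`(Y + Y²/2)⁻²` is dominated by `4/3` times the derivative of `-1 / p(Y)` with `p(Y) = Y³ + 3Y²`.
This `p` is chosen because `∫₀ʳ (Y + Y²/2) dY = p(r) / 6`, so the product of the two integrals
is at most `(4/3)(1/6) / μ² = 2 / (9 μ²)` for every `r`, and `4 · 2 / (9 μ²) ≤ 9/10` once
`μ > 199/200`.
-/

theorem hasDerivAt_neg_inv_cubic {x : ℝ} (hx : 0 < x) :
    HasDerivAt (fun Y : ℝ => -(Y ^ 3 + 3 * Y ^ 2)⁻¹)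
      ((3 * x ^ 2 + 6 * x) / (x ^ 3 + 3 * x ^ 2) ^ 2) x := by
  have hp : HasDerivAt (fun Y : ℝ => Y ^ 3 + 3 * Y ^ 2) (3 * x ^ 2 + 6 * x) x :=
    ((hasDerivAt_pow 3 x).add ((hasDerivAt_pow 2 x).const_mul 3)).congr_deriv (by ring)
  exact (hp.inv (by positivity)).neg.congr_deriv (by ring)

theorem integral_Ioi_deriv_inv_cubic {r : ℝ} (hr : 0 < r) :
    IntegrableOn (fun Y : ℝ => (3 * Y ^ 2 + 6 * Y) / (Y ^ 3 + 3 * Y ^ 2) ^ 2) (Ioi r) ∧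
      ∫ Y in Ioi r, (3 * Y ^ 2 + 6 * Y) / (Y ^ 3 + 3 * Y ^ 2) ^ 2 = (r ^ 3 + 3 * r ^ 2)⁻¹ := by
  have hcont : ContinuousWithinAt (fun Y : ℝ => -(Y ^ 3 + 3 * Y ^ 2)⁻¹) (Ici r) r :=
    (hasDerivAt_neg_inv_cubic hr).continuousAt.continuousWithinAt
  have hderiv : ∀ x ∈ Ioi r, HasDerivAt (fun Y : ℝ => -(Y ^ 3 + 3 * Y ^ 2)⁻¹)
      ((3 * x ^ 2 + 6 * x) / (x ^ 3 + 3 * x ^ 2) ^ 2) x :=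
    fun x hx => hasDerivAt_neg_inv_cubic (hr.trans hx)
  have hnonneg : ∀ x ∈ Ioi r, 0 ≤ (3 * x ^ 2 + 6 * x) / (x ^ 3 + 3 * x ^ 2) ^ 2 := by
    intro x hx
    have := hr.trans hx
    positivity
  have hlim : Tendsto (fun Y : ℝ => -(Y ^ 3 + 3 * Y ^ 2)⁻¹) atTop (𝓝 0) := by
    have hp : Tendsto (fun Y : ℝ => Y ^ 3 + 3 * Y ^ 2) atTop atTop :=
      tendsto_atTop_mono (fun Y => le_add_of_nonneg_right (by positivity))
        (tendsto_pow_atTop three_ne_zero)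
    simpa using hp.inv_tendsto_atTop.neg
  refine ⟨integrableOn_Ioi_deriv_of_nonneg hcont hderiv hnonneg hlim, ?_⟩
  rw [integral_Ioi_of_hasDerivAt_of_nonneg hcont hderiv hnonneg hlim]
  ring

theorem inv_sq_le_deriv_inv_cubic {Y : ℝ} (hY : 0 < Y) :
    ((Y + Y ^ 2 / 2) ^ 2)⁻¹ ≤ 4 / 3 * ((3 * Y ^ 2 + 6 * Y) / (Y ^ 3 + 3 * Y ^ 2) ^ 2) := by
  rw [inv_eq_one_div, ← mul_div_assoc, div_le_div_iff₀ (by positivity) (by positivity)]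
  -- after clearing denominators this is `Y (Y + 3)² ≤ (Y + 2)³`
  nlinarith [pow_pos hY 3, pow_pos hY 4, pow_pos hY 5]

theorem inv_sq_mul_add_half_sq_le {mu Y : ℝ} (hmu : 0 < mu) (hmu1 : mu ≤ 1) (hY : 0 < Y) :
    ((mu * Y + Y ^ 2 / 2) ^ 2)⁻¹ ≤ (mu ^ 2)⁻¹ * ((Y + Y ^ 2 / 2) ^ 2)⁻¹ := by
  rw [← mul_inv, ← mul_pow]
  gcongr
  nlinarith

theorem setIntegral_Ioi_rpow_neg_mul_inv_sq_le {a mu r : ℝ} (ha : 0 ≤ a) (hmu : 0 < mu)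
    (hmu1 : mu ≤ 1) (hr : 0 < r) :
    ∫ Y in Ioi r, Y ^ (-a) * ((mu * Y + Y ^ 2 / 2) ^ 2)⁻¹
      ≤ r ^ (-a) * ((mu ^ 2)⁻¹ * (4 / 3 * (r ^ 3 + 3 * r ^ 2)⁻¹)) := by
  obtain ⟨hint, hval⟩ := integral_Ioi_deriv_inv_cubic hr
  have hle : ∀ Y ∈ Ioi r, Y ^ (-a) * ((mu * Y + Y ^ 2 / 2) ^ 2)⁻¹
      ≤ r ^ (-a) * ((mu ^ 2)⁻¹ * (4 / 3 * ((3 * Y ^ 2 + 6 * Y) / (Y ^ 3 + 3 * Y ^ 2) ^ 2))) := by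
    intro Y hY
    have hY0 : 0 < Y := hr.trans hY
    gcongr ?_ * ?_
    · exact Real.rpow_le_rpow_of_nonpos hr hY.le (neg_nonpos.mpr ha)
    · exact (inv_sq_mul_add_half_sq_le hmu hmu1 hY0).trans
        (by gcongr; exact inv_sq_le_deriv_inv_cubic hY0)
  calc ∫ Y in Ioi r, Y ^ (-a) * ((mu * Y + Y ^ 2 / 2) ^ 2)⁻¹
      ≤ ∫ Y in Ioi r, r ^ (-a) * ((mu ^ 2)⁻¹ *
          (4 / 3 * ((3 * Y ^ 2 + 6 * Y) / (Y ^ 3 + 3 * Y ^ 2) ^ 2))) := by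
        refine integral_mono_of_nonneg ?_ ((hint.const_mul _).const_mul _ |>.const_mul _)
          ((ae_restrict_mem measurableSet_Ioi).mono hle)
        filter_upwards [ae_restrict_mem measurableSet_Ioi] with Y hY
        have hY0 : 0 < Y := hr.trans hY
        positivity
    _ = r ^ (-a) * ((mu ^ 2)⁻¹ * (4 / 3 * (r ^ 3 + 3 * r ^ 2)⁻¹)) := by
        rw [integral_const_mul, integral_const_mul, integral_const_mul, hval]

theorem setIntegral_Ioo_rpow_mul_le {a r : ℝ} (ha : 0 ≤ a) (hr : 0 < r) :
    ∫ Y in Ioo 0 r, Y ^ a * (Y + Y ^ 2 / 2) ≤ r ^ a * ((r ^ 3 + 3 * r ^ 2) / 6) := by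
  have hpoly : ∫ Y in Ioo 0 r, (Y + Y ^ 2 / 2) = (r ^ 3 + 3 * r ^ 2) / 6 := by
    rw [integral_Ioc_eq_integral_Ioo.symm, ← intervalIntegral.integral_of_le hr.le,
      intervalIntegral.integral_add intervalIntegral.intervalIntegrable_id
        (by apply Continuous.intervalIntegrable; fun_prop),
      intervalIntegral.integral_div]
    norm_num [integral_id, integral_pow]
    ring
  calc ∫ Y in Ioo 0 r, Y ^ a * (Y + Y ^ 2 / 2)
      ≤ ∫ Y in Ioo 0 r, r ^ a * (Y + Y ^ 2 / 2) := by
        refine integral_mono_of_nonneg ?_ ?_ ?_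
        · filter_upwards [ae_restrict_mem measurableSet_Ioo] with Y hY
          have := hY.1
          positivity
        · exact (Continuous.integrableOn_Icc (by fun_prop)).mono_set Ioo_subset_Icc_self
        · filter_upwards [ae_restrict_mem measurableSet_Ioo] with Y hY
          have := hY.1
          gcongr
          exact hY.2.le
    _ = r ^ a * ((r ^ 3 + 3 * r ^ 2) / 6) := by rw [integral_const_mul, hpoly]

/-- The constant `C̄(a,μ) = 4·sup_{r>0}(∫_r^∞ Y^{-a}(μY+Y²/2)^{-2} dY)(∫_0^r Y^a(Y+Y²/2) dY)`
of the weighted Hardy inequality is at most `9/10` for `a` small and `μ` close to `1`. -/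
theorem hardy_constant_small :
    ∃ abar : ℝ, 0 < abar ∧ ∃ mu0 : ℝ, mu0 ∈ Ioo (0:ℝ) 1 ∧
      ∀ a ∈ Ioo (0:ℝ) abar, ∀ mu ∈ Ioo mu0 (1:ℝ), ∀ r : ℝ, 0 < r →
        4 * ((∫ Y in Ioi r, Y ^ (-a) * ((mu * Y + Y ^ 2 / 2) ^ 2)⁻¹)
            * ∫ Y in Ioo (0:ℝ) r, Y ^ a * (Y + Y ^ 2 / 2)) ≤ 9 / 10 := by
  refine ⟨1, one_pos, 199 / 200, ⟨by norm_num, by norm_num⟩, ?_⟩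
  rintro a ⟨ha, -⟩ mu ⟨hmu, hmu1⟩ r hr
  have hmu0 : 0 < mu := by linarith
  have hhead_nonneg : 0 ≤ ∫ Y in Ioo (0:ℝ) r, Y ^ a * (Y + Y ^ 2 / 2) :=
    setIntegral_nonneg measurableSet_Ioo fun Y hY => by have := hY.1; positivity
  calc 4 * ((∫ Y in Ioi r, Y ^ (-a) * ((mu * Y + Y ^ 2 / 2) ^ 2)⁻¹)
          * ∫ Y in Ioo (0:ℝ) r, Y ^ a * (Y + Y ^ 2 / 2))
      ≤ 4 * ((r ^ (-a) * ((mu ^ 2)⁻¹ * (4 / 3 * (r ^ 3 + 3 * r ^ 2)⁻¹)))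
          * (r ^ a * ((r ^ 3 + 3 * r ^ 2) / 6))) := by
        gcongr
        · exact setIntegral_Ioi_rpow_neg_mul_inv_sq_le ha.le hmu0 hmu1.le hr
        · exact setIntegral_Ioo_rpow_mul_le ha.le hr
    _ = 8 / 9 / mu ^ 2 := by
        rw [Real.rpow_neg hr.le]
        field_simp
        norm_num
    _ ≤ 9 / 10 := by
        rw [div_le_iff₀ (by positivity)]
        nlinarith
end

section
/- Let k ≥ 2, a ∈ (0,1), β > 0 and m ∈ ℕ. There exist constants C > 0 (depending only on k, m, a) and S0 > 0 such that for every s ≥ S0, with w(Y) := Y^{-a}·(1+s^{-β}·Y)^{-m}, the following hold for every locally absolutely continuous f : [0,∞) → ℝ with a.e. derivative f': (i) if f(0) = 0, then ∫_0^∞ f²·(1+Y)^{-k}·w dY ≤ C·∫_0^∞ (f')²·(1+Y)^{-(k-2)}·w dY; (ii) if f(Y) = O(Y^{k/2}) as Y → 0, then ∫_0^∞ f²·Y^{-k}·w dY ≤ C·∫_0^∞ (f')²·Y^{-(k-2)}·w dY. -/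
open Set MeasureTheory Filter Asymptotics
open scoped Topology ENNReal

/-!
Write `f(Y) = ∫₀^Y f'`. Cauchy–Schwarz with the weight `t^b` (`b < 1`) gives
`f(Y)² ≤ Y^(1-b)/(1-b) · ∫₀^Y f'(t)² t^b dt`, and Tonelli turns `∫ f² G` into `∫ f'(t)² T(t) dt`
with the tail `T(t) = t^b ∫_t^∞ Y^(1-b)/(1-b) G(Y) dY`. Take `b = 1 - a` in (i) and `b = 0` in (ii).
Since `Y ↦ (1 + s^(-β) Y)^(-m)` is nonincreasing, it leaves the tail integral at its value at `t`;
the remaining power integrals are explicit and give `T ≤ a⁻¹ · (the weight of f'²)`, whatever `s`.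
In (ii), `f = O(Y^(k/2))` forces `f(0) = 0`.
-/

theorem lintegral_Ioo_rpow {e Y : ℝ} (he : -1 < e) (hY : 0 < Y) :
    ∫⁻ t in Ioo 0 Y, ENNReal.ofReal (t ^ e) = ENNReal.ofReal (Y ^ (e + 1) / (e + 1)) := by
  have hint : IntegrableOn (fun t : ℝ => t ^ e) (Ioc 0 Y) :=
    (intervalIntegrable_iff_integrableOn_Ioc_of_le hY.le).mp
      (intervalIntegral.intervalIntegrable_rpow' he)
  rw [setLIntegral_congr Ioo_ae_eq_Ioc, ← ofReal_integral_eq_lintegral_ofReal hint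
    (ae_restrict_of_forall_mem measurableSet_Ioc fun t ht => Real.rpow_nonneg ht.1.le _),
    ← intervalIntegral.integral_of_le hY.le, integral_rpow (Or.inl he),
    Real.zero_rpow (by linarith), sub_zero]

theorem lintegral_Ioi_rpow {e c : ℝ} (he : e < -1) (hc : 0 < c) :
    ∫⁻ x in Ioi c, ENNReal.ofReal (x ^ e) = ENNReal.ofReal (c ^ (e + 1) / -(e + 1)) := by
  rw [← ofReal_integral_eq_lintegral_ofReal (integrableOn_Ioi_rpow_of_lt he hc)
    (ae_restrict_of_forall_mem measurableSet_Ioi fun x hx => Real.rpow_nonneg (hc.trans hx).le _),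
    integral_Ioi_rpow_of_lt he hc, neg_div, div_neg]

theorem lintegral_Ioi_add_rpow {e c t : ℝ} (he : e < -1) (hct : 0 < c + t) :
    ∫⁻ x in Ioi t, ENNReal.ofReal ((c + x) ^ e) =
      ENNReal.ofReal ((c + t) ^ (e + 1) / -(e + 1)) := by
  rw [← lintegral_Ioi_rpow he hct,
    ← (measurePreserving_add_left volume c).setLIntegral_comp_preimage (s := Ioi (c + t))
      measurableSet_Ioi (by fun_prop), preimage_const_add_Ioi, add_sub_cancel_left]

theorem ENNReal.lintegral_mul_sq_le {α : Type*} [MeasurableSpace α] {μ : Measure α}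
    {φ ψ : α → ℝ≥0∞} (hφ : AEMeasurable φ μ) (hψ : AEMeasurable ψ μ) :
    (∫⁻ x, φ x * ψ x ∂μ) ^ 2 ≤ (∫⁻ x, φ x ^ 2 ∂μ) * ∫⁻ x, ψ x ^ 2 ∂μ := by
  have h := ENNReal.lintegral_mul_le_Lp_mul_Lq μ Real.HolderConjugate.two_two hφ hψ
  simp only [Pi.mul_apply, ENNReal.rpow_two] at h
  calc (∫⁻ x, φ x * ψ x ∂μ) ^ 2
      ≤ ((∫⁻ x, φ x ^ 2 ∂μ) ^ (1 / 2 : ℝ) * (∫⁻ x, ψ x ^ 2 ∂μ) ^ (1 / 2 : ℝ)) ^ 2 :=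
        pow_le_pow_left' h 2
    _ = (∫⁻ x, φ x ^ 2 ∂μ) * ∫⁻ x, ψ x ^ 2 ∂μ := by
        rw [mul_pow, ← ENNReal.rpow_natCast, ← ENNReal.rpow_natCast, ← ENNReal.rpow_mul,
          ← ENNReal.rpow_mul]
        norm_num

theorem ofReal_sq_intervalIntegral_le {f' : ℝ → ℝ} {b Y : ℝ} (hb : b < 1) (hY : 0 < Y)
    (hf' : IntervalIntegrable f' volume 0 Y) :
    ENNReal.ofReal ((∫ t in (0:ℝ)..Y, f' t) ^ 2) ≤
      ENNReal.ofReal (Y ^ (1 - b) / (1 - b)) *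
        ∫⁻ t in Ioo 0 Y, ENNReal.ofReal (f' t ^ 2 * t ^ b) := by
  set φ : ℝ → ℝ≥0∞ := fun t => ENNReal.ofReal (|f' t| * t ^ (b / 2))
  set ψ : ℝ → ℝ≥0∞ := fun t => ENNReal.ofReal (t ^ (-(b / 2)))
  have hf'm : AEMeasurable f' (volume.restrict (Ioo 0 Y)) :=
    (hf'.1.mono_set Ioo_subset_Ioc_self).aemeasurable
  have h_abs : ENNReal.ofReal ((∫ t in (0:ℝ)..Y, f' t) ^ 2) ≤
      (∫⁻ t in Ioo 0 Y, φ t * ψ t) ^ 2 := by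
    calc ENNReal.ofReal ((∫ t in (0:ℝ)..Y, f' t) ^ 2)
        = ‖∫ t in Ioc 0 Y, f' t‖ₑ ^ 2 := by
          rw [intervalIntegral.integral_of_le hY.le, ← sq_abs,
            ENNReal.ofReal_pow (abs_nonneg _), Real.enorm_eq_ofReal_abs]
      _ ≤ (∫⁻ t in Ioc 0 Y, ‖f' t‖ₑ) ^ 2 :=
          pow_le_pow_left' (enorm_integral_le_lintegral_enorm _) 2
      _ = (∫⁻ t in Ioo 0 Y, φ t * ψ t) ^ 2 := by
          rw [setLIntegral_congr Ioo_ae_eq_Ioc.symm]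
          congr 1
          refine setLIntegral_congr_fun measurableSet_Ioo fun t ht => ?_
          rw [← ENNReal.ofReal_mul (mul_nonneg (abs_nonneg _) (Real.rpow_nonneg ht.1.le _)),
            mul_assoc, ← Real.rpow_add ht.1,
            add_neg_cancel, Real.rpow_zero, mul_one, Real.enorm_eq_ofReal_abs]
  have hφ : ∫⁻ t in Ioo 0 Y, φ t ^ 2 = ∫⁻ t in Ioo 0 Y, ENNReal.ofReal (f' t ^ 2 * t ^ b) :=
    setLIntegral_congr_fun measurableSet_Ioo fun t ht => by
      rw [← ENNReal.ofReal_pow (mul_nonneg (abs_nonneg _) (Real.rpow_nonneg ht.1.le _)),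
        mul_pow, sq_abs, ← Real.rpow_mul_natCast ht.1.le]
      norm_num
  have hψ : ∫⁻ t in Ioo 0 Y, ψ t ^ 2 = ENNReal.ofReal (Y ^ (1 - b) / (1 - b)) := by
    rw [← neg_add_eq_sub, ← lintegral_Ioo_rpow (by linarith) hY]
    refine setLIntegral_congr_fun measurableSet_Ioo fun t ht => ?_
    rw [← ENNReal.ofReal_pow (Real.rpow_nonneg ht.1.le _), ← Real.rpow_mul_natCast ht.1.le]
    norm_num
  calc ENNReal.ofReal ((∫ t in (0:ℝ)..Y, f' t) ^ 2)
      ≤ (∫⁻ t in Ioo 0 Y, φ t ^ 2) * ∫⁻ t in Ioo 0 Y, ψ t ^ 2 :=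
        h_abs.trans (ENNReal.lintegral_mul_sq_le (by fun_prop) (by fun_prop))
    _ = _ := by rw [hφ, hψ, mul_comm]

theorem aemeasurable_restrict_Ioi_of_intervalIntegrable {f : ℝ → ℝ} {a : ℝ}
    (hf : ∀ x, a ≤ x → IntervalIntegrable f volume a x) :
    AEMeasurable f (volume.restrict (Ioi a)) := by
  have hU : ⋃ n : ℕ, Ioc a (a + n) = Ioi a := iUnion_Ioc_eq_Ioi_self_iff.2 fun x _ => by
    obtain ⟨n, hn⟩ := exists_nat_ge (x - a)
    exact ⟨n, by linarith⟩
  rw [← hU, aemeasurable_iUnion_iff]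
  exact fun n => (hf _ (by simp)).1.aemeasurable

theorem lintegral_Ioi_mul_lintegral_Ioo_eq {a : ℝ} {g h : ℝ → ℝ≥0∞} (hg : Measurable g)
    (hh : AEMeasurable h (volume.restrict (Ioi a))) :
    ∫⁻ Y in Ioi a, g Y * ∫⁻ t in Ioo a Y, h t = ∫⁻ t in Ioi a, h t * ∫⁻ Y in Ioi t, g Y := by
  set F : ℝ × ℝ → ℝ≥0∞ := {p | p.2 < p.1}.indicator fun p => g p.1 * hh.mk h p.2
  have hF : Measurable F :=
    ((hg.comp measurable_fst).mul (hh.measurable_mk.comp measurable_snd)).indicator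
      (measurableSet_lt measurable_snd measurable_fst)
  have hFY : ∀ Y, (fun t => F (Y, t)) = (Iio Y).indicator fun t => g Y * hh.mk h t := fun Y =>
    funext fun t => by simp only [F, indicator, mem_ofPred_eq, mem_Iio]
  have hFt : ∀ t, (fun Y => F (Y, t)) = (Ioi t).indicator fun Y => g Y * hh.mk h t := fun t =>
    funext fun Y => by simp only [F, indicator, mem_ofPred_eq, mem_Ioi]
  calc ∫⁻ Y in Ioi a, g Y * ∫⁻ t in Ioo a Y, h t
      = ∫⁻ Y in Ioi a, ∫⁻ t in Ioi a, F (Y, t) := by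
        refine lintegral_congr fun Y => ?_
        rw [hFY, lintegral_indicator measurableSet_Iio, Measure.restrict_restrict measurableSet_Iio,
          Iio_inter_Ioi, lintegral_const_mul _ hh.measurable_mk]
        congr 1
        exact lintegral_congr_ae
          (ae_restrict_of_ae_restrict_of_subset Ioo_subset_Ioi_self hh.ae_eq_mk)
    _ = ∫⁻ t in Ioi a, ∫⁻ Y in Ioi a, F (Y, t) := lintegral_lintegral_swap hF.aemeasurable
    _ = ∫⁻ t in Ioi a, hh.mk h t * ∫⁻ Y in Ioi t, g Y := by
        refine setLIntegral_congr_fun measurableSet_Ioi fun t ht => ?_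
        rw [hFt, lintegral_indicator measurableSet_Ioi, Measure.restrict_restrict measurableSet_Ioi,
          inter_eq_left.2 (Ioi_subset_Ioi (le_of_lt ht)), lintegral_mul_const _ hg, mul_comm]
    _ = ∫⁻ t in Ioi a, h t * ∫⁻ Y in Ioi t, g Y := by
        refine lintegral_congr_ae ?_
        filter_upwards [hh.ae_eq_mk] with t ht
        rw [ht]

noncomputable def hardyTail (b : ℝ) (G : ℝ → ℝ≥0∞) (t : ℝ) : ℝ≥0∞ :=
  ENNReal.ofReal (t ^ b) * ∫⁻ Y in Ioi t, ENNReal.ofReal (Y ^ (1 - b) / (1 - b)) * G Y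

theorem lintegral_sq_intervalIntegral_mul_le {f' : ℝ → ℝ}
    (hf' : ∀ x, 0 ≤ x → IntervalIntegrable f' volume 0 x) {b : ℝ} (hb : b < 1)
    {G : ℝ → ℝ≥0∞} (hG : Measurable G) :
    ∫⁻ Y in Ioi 0, ENNReal.ofReal ((∫ t in (0:ℝ)..Y, f' t) ^ 2) * G Y ≤
      ∫⁻ t in Ioi 0, ENNReal.ofReal (f' t ^ 2) * hardyTail b G t := by
  have hf'm := aemeasurable_restrict_Ioi_of_intervalIntegrable hf'
  calc ∫⁻ Y in Ioi 0, ENNReal.ofReal ((∫ t in (0:ℝ)..Y, f' t) ^ 2) * G Y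
      ≤ ∫⁻ Y in Ioi 0, ENNReal.ofReal (Y ^ (1 - b) / (1 - b)) * G Y *
          ∫⁻ t in Ioo 0 Y, ENNReal.ofReal (f' t ^ 2 * t ^ b) :=
        setLIntegral_mono' measurableSet_Ioi fun Y hY => by
          rw [mul_right_comm]
          exact mul_le_mul_left (ofReal_sq_intervalIntegral_le hb hY (hf' Y hY.le)) _
    _ = ∫⁻ t in Ioi 0, ENNReal.ofReal (f' t ^ 2) * hardyTail b G t := by
        rw [lintegral_Ioi_mul_lintegral_Ioo_eq (by fun_prop) (by fun_prop)]
        refine setLIntegral_congr_fun measurableSet_Ioi fun t _ => ?_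
        rw [hardyTail, ENNReal.ofReal_mul (sq_nonneg _), mul_assoc]

theorem lintegral_sq_intervalIntegral_mul_le_of_hardyTail_le {f' : ℝ → ℝ}
    (hf' : ∀ x, 0 ≤ x → IntervalIntegrable f' volume 0 x) {b : ℝ} (hb : b < 1)
    {G : ℝ → ℝ≥0∞} (hG : Measurable G) {C : ℝ} (hC : 0 ≤ C) {W : ℝ → ℝ}
    (hW : ∀ t > 0, hardyTail b G t ≤ ENNReal.ofReal (C * W t)) :
    ∫⁻ Y in Ioi 0, ENNReal.ofReal ((∫ t in (0:ℝ)..Y, f' t) ^ 2) * G Y ≤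
      ENNReal.ofReal C * ∫⁻ t in Ioi 0, ENNReal.ofReal (f' t ^ 2 * W t) := by
  refine (lintegral_sq_intervalIntegral_mul_le hf' hb hG).trans ?_
  rw [← lintegral_const_mul' _ _ ENNReal.ofReal_ne_top]
  refine setLIntegral_mono' measurableSet_Ioi fun t ht => ?_
  calc ENNReal.ofReal (f' t ^ 2) * hardyTail b G t
      ≤ ENNReal.ofReal (f' t ^ 2) * ENNReal.ofReal (C * W t) := mul_le_mul_right (hW t ht) _
    _ = ENNReal.ofReal C * ENNReal.ofReal (f' t ^ 2 * W t) := by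
        rw [ENNReal.ofReal_mul hC, ENNReal.ofReal_mul (sq_nonneg _), mul_left_comm]

theorem lintegral_Ioi_mul_le_of_antitoneOn {g v : ℝ → ℝ} {t : ℝ} (hv : AntitoneOn v (Ici t))
    (hg : ∀ Y > t, 0 ≤ g Y) :
    ∫⁻ Y in Ioi t, ENNReal.ofReal (v Y * g Y) ≤
      ENNReal.ofReal (v t) * ∫⁻ Y in Ioi t, ENNReal.ofReal (g Y) := by
  rw [← lintegral_const_mul' _ _ ENNReal.ofReal_ne_top]
  refine setLIntegral_mono' measurableSet_Ioi fun Y hY => ?_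
  rw [← ENNReal.ofReal_mul' (hg Y hY)]
  exact ENNReal.ofReal_le_ofReal
    (mul_le_mul_of_nonneg_right (hv self_mem_Ici (mem_Ici.2 (le_of_lt hY)) (le_of_lt hY)) (hg Y hY))

theorem hardyTail_one_add_le {k a : ℝ} (hk : 2 ≤ k) (ha : 0 < a) {v : ℝ → ℝ}
    (hv0 : ∀ Y > 0, 0 ≤ v Y) (hv : AntitoneOn v (Ioi 0)) {t : ℝ} (ht : 0 < t) :
    hardyTail (1 - a) (fun Y => ENNReal.ofReal ((1 + Y) ^ (-k) * (Y ^ (-a) * v Y))) t ≤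
      ENNReal.ofReal (a⁻¹ * ((1 + t) ^ (-(k - 2)) * (t ^ (-a) * v t))) := by
  have hvt := hv0 t ht
  have hk1 : 0 < k - 1 := by linarith
  rw [hardyTail, sub_sub_cancel]
  calc ENNReal.ofReal (t ^ (1 - a)) * ∫⁻ Y in Ioi t,
        ENNReal.ofReal (Y ^ a / a) * ENNReal.ofReal ((1 + Y) ^ (-k) * (Y ^ (-a) * v Y))
      = ENNReal.ofReal (t ^ (1 - a)) *
          ∫⁻ Y in Ioi t, ENNReal.ofReal (v Y * (a⁻¹ * (1 + Y) ^ (-k))) := by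
        congr 1
        refine setLIntegral_congr_fun measurableSet_Ioi fun Y hY => ?_
        have hY : 0 < Y := ht.trans hY
        rw [← ENNReal.ofReal_mul (by positivity), Real.rpow_neg hY.le]
        field_simp
    _ ≤ ENNReal.ofReal (t ^ (1 - a)) *
          (ENNReal.ofReal (v t) * ∫⁻ Y in Ioi t, ENNReal.ofReal (a⁻¹ * (1 + Y) ^ (-k))) :=
        mul_le_mul_right (lintegral_Ioi_mul_le_of_antitoneOn (hv.mono (Ici_subset_Ioi.2 ht))
          fun Y hY => mul_nonneg (inv_nonneg.2 ha.le) (Real.rpow_nonneg (by linarith) _)) _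
    _ = ENNReal.ofReal (t ^ (1 - a) * (v t * (a⁻¹ * ((1 + t) ^ (-k + 1) / (k - 1))))) := by
        simp_rw [ENNReal.ofReal_mul (inv_nonneg.2 ha.le)]
        rw [lintegral_const_mul' _ _ ENNReal.ofReal_ne_top,
          lintegral_Ioi_add_rpow (by linarith) (by linarith), show -(-k + 1) = k - 1 by ring,
          ← ENNReal.ofReal_mul (inv_nonneg.2 ha.le), ← ENNReal.ofReal_mul hvt,
          ← ENNReal.ofReal_mul (by positivity)]
    _ ≤ ENNReal.ofReal (a⁻¹ * ((1 + t) ^ (-(k - 2)) * (t ^ (-a) * v t))) := by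
        refine ENNReal.ofReal_le_ofReal ?_
        have hq : t / ((1 + t) * (k - 1)) ≤ 1 := div_le_one_of_le₀ (by nlinarith) (by positivity)
        calc t ^ (1 - a) * (v t * (a⁻¹ * ((1 + t) ^ (-k + 1) / (k - 1))))
            = a⁻¹ * ((1 + t) ^ (-(k - 2)) * (t ^ (-a) * v t)) * (t / ((1 + t) * (k - 1))) := by
              rw [sub_eq_add_neg, Real.rpow_add ht, Real.rpow_one,
                show -k + 1 = -(k - 2) - 1 by ring, Real.rpow_sub_one (by positivity)]
              field_simp
          _ ≤ a⁻¹ * ((1 + t) ^ (-(k - 2)) * (t ^ (-a) * v t)) :=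
              mul_le_of_le_one_right (by positivity) hq

theorem hardyTail_rpow_le {k a : ℝ} (hk : 2 ≤ k) (ha : 0 < a) {v : ℝ → ℝ}
    (hv0 : ∀ Y > 0, 0 ≤ v Y) (hv : AntitoneOn v (Ioi 0)) {t : ℝ} (ht : 0 < t) :
    hardyTail 0 (fun Y => ENNReal.ofReal (Y ^ (-k) * (Y ^ (-a) * v Y))) t ≤
      ENNReal.ofReal (a⁻¹ * (t ^ (-(k - 2)) * (t ^ (-a) * v t))) := by
  have hvt := hv0 t ht
  simp only [hardyTail, Real.rpow_zero, ENNReal.ofReal_one, one_mul, sub_zero, div_one,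
    Real.rpow_one]
  calc ∫⁻ Y in Ioi t, ENNReal.ofReal Y * ENNReal.ofReal (Y ^ (-k) * (Y ^ (-a) * v Y))
      = ∫⁻ Y in Ioi t, ENNReal.ofReal (v Y * Y ^ (1 - k - a)) := by
        refine setLIntegral_congr_fun measurableSet_Ioi fun Y hY => ?_
        have hY : 0 < Y := ht.trans hY
        rw [← ENNReal.ofReal_mul hY.le, sub_sub, sub_eq_add_neg, Real.rpow_add hY, Real.rpow_one,
          neg_add, Real.rpow_add hY]
        ring_nf
    _ ≤ ENNReal.ofReal (v t) * ∫⁻ Y in Ioi t, ENNReal.ofReal (Y ^ (1 - k - a)) :=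
        lintegral_Ioi_mul_le_of_antitoneOn (hv.mono (Ici_subset_Ioi.2 ht))
          fun Y hY => Real.rpow_nonneg (ht.trans hY).le _
    _ = ENNReal.ofReal (v t * (t ^ (-(k - 2)) * t ^ (-a) / (k + a - 2))) := by
        rw [lintegral_Ioi_rpow (by linarith) ht, ← ENNReal.ofReal_mul hvt, ← Real.rpow_add ht]
        ring_nf
    _ ≤ ENNReal.ofReal (a⁻¹ * (t ^ (-(k - 2)) * (t ^ (-a) * v t))) := by
        refine ENNReal.ofReal_le_ofReal ?_
        rw [div_eq_mul_inv]
        calc v t * (t ^ (-(k - 2)) * t ^ (-a) * (k + a - 2)⁻¹)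
            = (k + a - 2)⁻¹ * (t ^ (-(k - 2)) * (t ^ (-a) * v t)) := by ring
          _ ≤ a⁻¹ * (t ^ (-(k - 2)) * (t ^ (-a) * v t)) :=
              mul_le_mul_of_nonneg_right (inv_anti₀ ha (by linarith)) (by positivity)

theorem eq_zero_of_isBigO_rpow {f f' : ℝ → ℝ} {p : ℝ} (hp : 0 < p)
    (hf' : IntervalIntegrable f' volume 0 1)
    (hf : ∀ x, 0 ≤ x → f x = f 0 + ∫ t in (0:ℝ)..x, f' t)
    (hO : f =O[𝓝[>] 0] fun Y => Y ^ p) : f 0 = 0 := by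
  have h_zero : Tendsto f (𝓝[>] 0) (𝓝 0) := hO.trans_tendsto <| by
    simpa [Real.zero_rpow hp.ne'] using
      (Real.continuousAt_rpow_const 0 p (Or.inr hp.le)).tendsto.mono_left nhdsWithin_le_nhds
  have h_primitive : Tendsto (fun x => ∫ t in (0:ℝ)..x, f' t) (𝓝[>] 0) (𝓝 0) := by
    have h := (intervalIntegral.continuousOn_primitive_interval' hf' left_mem_uIcc 0
      left_mem_uIcc).tendsto
    rw [intervalIntegral.integral_same] at h
    refine h.mono_left (nhdsWithin_le_of_mem (mem_of_superset (Ioc_mem_nhdsGT one_pos) ?_))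
    rw [uIcc_of_le zero_le_one]
    exact Ioc_subset_Icc_self
  have h_f0 : Tendsto f (𝓝[>] 0) (𝓝 (f 0)) := by
    simpa using (tendsto_const_nhds.add h_primitive).congr'
      (eventually_nhdsWithin_of_forall fun x hx => (hf x (mem_Ioi.1 hx).le).symm)
  exact tendsto_nhds_unique h_f0 h_zero

theorem antitoneOn_one_add_mul_rpow_neg {r p : ℝ} (hr : 0 ≤ r) (hp : 0 ≤ p) :
    AntitoneOn (fun Y => (1 + r * Y) ^ (-p)) (Ici 0) := fun x hx y _ hxy =>
  Real.rpow_le_rpow_of_nonpos (by have := mem_Ici.1 hx; positivity)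
    (by gcongr) (neg_nonpos.2 hp)

section WeightedHardy

variable {k a : ℝ} {v f f' : ℝ → ℝ}

theorem lintegral_sq_mul_one_add_rpow_le (hk : 2 ≤ k) (ha : a ∈ Ioo 0 1) (hvm : Measurable v)
    (hv0 : ∀ Y > 0, 0 ≤ v Y) (hv : AntitoneOn v (Ioi 0))
    (hf' : ∀ x, 0 ≤ x → IntervalIntegrable f' volume 0 x)
    (hf : ∀ x, 0 ≤ x → f x = ∫ t in (0:ℝ)..x, f' t) :
    ∫⁻ Y in Ioi 0, ENNReal.ofReal (f Y ^ 2 * (1 + Y) ^ (-k) * (Y ^ (-a) * v Y)) ≤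
      ENNReal.ofReal a⁻¹ * ∫⁻ Y in Ioi 0,
        ENNReal.ofReal (f' Y ^ 2 * (1 + Y) ^ (-(k - 2)) * (Y ^ (-a) * v Y)) := by
  calc ∫⁻ Y in Ioi 0, ENNReal.ofReal (f Y ^ 2 * (1 + Y) ^ (-k) * (Y ^ (-a) * v Y))
      = ∫⁻ Y in Ioi 0, ENNReal.ofReal ((∫ t in (0:ℝ)..Y, f' t) ^ 2) *
          ENNReal.ofReal ((1 + Y) ^ (-k) * (Y ^ (-a) * v Y)) :=
        setLIntegral_congr_fun measurableSet_Ioi fun Y hY => by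
          rw [hf Y (le_of_lt hY), mul_assoc, ENNReal.ofReal_mul (sq_nonneg _)]
    _ ≤ _ := lintegral_sq_intervalIntegral_mul_le_of_hardyTail_le hf' (by linarith [ha.1])
          (by fun_prop) (inv_nonneg.2 ha.1.le) fun t ht => hardyTail_one_add_le hk ha.1 hv0 hv ht
    _ = _ := by simp only [mul_assoc]

theorem lintegral_sq_mul_rpow_le (hk : 2 ≤ k) (ha : 0 < a) (hvm : Measurable v)
    (hv0 : ∀ Y > 0, 0 ≤ v Y) (hv : AntitoneOn v (Ioi 0))
    (hf' : ∀ x, 0 ≤ x → IntervalIntegrable f' volume 0 x)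
    (hf : ∀ x, 0 ≤ x → f x = ∫ t in (0:ℝ)..x, f' t) :
    ∫⁻ Y in Ioi 0, ENNReal.ofReal (f Y ^ 2 * Y ^ (-k) * (Y ^ (-a) * v Y)) ≤
      ENNReal.ofReal a⁻¹ * ∫⁻ Y in Ioi 0,
        ENNReal.ofReal (f' Y ^ 2 * Y ^ (-(k - 2)) * (Y ^ (-a) * v Y)) := by
  calc ∫⁻ Y in Ioi 0, ENNReal.ofReal (f Y ^ 2 * Y ^ (-k) * (Y ^ (-a) * v Y))
      = ∫⁻ Y in Ioi 0, ENNReal.ofReal ((∫ t in (0:ℝ)..Y, f' t) ^ 2) *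
          ENNReal.ofReal (Y ^ (-k) * (Y ^ (-a) * v Y)) :=
        setLIntegral_congr_fun measurableSet_Ioi fun Y hY => by
          rw [hf Y (le_of_lt hY), mul_assoc, ENNReal.ofReal_mul (sq_nonneg _)]
    _ ≤ _ := lintegral_sq_intervalIntegral_mul_le_of_hardyTail_le hf' zero_lt_one
          (by fun_prop) (inv_nonneg.2 ha.le) fun t ht => hardyTail_rpow_le hk ha hv0 hv ht
    _ = _ := by simp only [mul_assoc]

end WeightedHardy

theorem hardy_special_weights_general (k a beta : ℝ) (m : ℕ)
    (hk : 2 ≤ k) (ha : a ∈ Ioo (0:ℝ) 1) :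
    ∃ C : ℝ, 0 < C ∧ ∃ S0 : ℝ, 0 < S0 ∧
      ∀ s : ℝ, S0 ≤ s →
        ∀ f f' : ℝ → ℝ,
          (∀ x : ℝ, 0 ≤ x → IntervalIntegrable f' volume 0 x) →
          (∀ x : ℝ, 0 ≤ x → f x = f 0 + ∫ t in (0:ℝ)..x, f' t) →
          ((f 0 = 0 →
            (∫⁻ Y in Ioi (0:ℝ), ENNReal.ofReal
                ((f Y) ^ 2 * (1 + Y) ^ (-k) * (Y ^ (-a) * (1 + s ^ (-beta) * Y) ^ (-(m:ℝ)))))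
              ≤ ENNReal.ofReal C * ∫⁻ Y in Ioi (0:ℝ), ENNReal.ofReal
                ((f' Y) ^ 2 * (1 + Y) ^ (-(k - 2)) * (Y ^ (-a) * (1 + s ^ (-beta) * Y) ^ (-(m:ℝ)))))
          ∧ ((f =O[nhdsWithin 0 (Ioi 0)] fun Y => Y ^ (k / 2)) →
            (∫⁻ Y in Ioi (0:ℝ), ENNReal.ofReal
                ((f Y) ^ 2 * Y ^ (-k) * (Y ^ (-a) * (1 + s ^ (-beta) * Y) ^ (-(m:ℝ)))))
              ≤ ENNReal.ofReal C * ∫⁻ Y in Ioi (0:ℝ), ENNReal.ofReal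
                ((f' Y) ^ 2 * Y ^ (-(k - 2)) * (Y ^ (-a) * (1 + s ^ (-beta) * Y) ^ (-(m:ℝ)))))) := by
  refine ⟨a⁻¹, inv_pos.2 ha.1, 1, one_pos, fun s hs f f' hf' hf => ?_⟩
  have hr : 0 ≤ s ^ (-beta) := Real.rpow_nonneg (zero_le_one.trans hs) _
  have hv := (antitoneOn_one_add_mul_rpow_neg hr m.cast_nonneg).mono Ioi_subset_Ici_self
  have hv0 : ∀ Y > 0, 0 ≤ (1 + s ^ (-beta) * Y) ^ (-(m:ℝ)) := fun Y hY => by positivity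
  have hf_primitive (hf0 : f 0 = 0) (x : ℝ) (hx : 0 ≤ x) : f x = ∫ t in (0:ℝ)..x, f' t := by
    rw [hf x hx, hf0, zero_add]
  refine ⟨fun hf0 => ?_, fun hO => ?_⟩
  · exact lintegral_sq_mul_one_add_rpow_le hk ha (by fun_prop) hv0 hv hf' (hf_primitive hf0)
  · have hf0 := eq_zero_of_isBigO_rpow (by linarith) (hf' 1 zero_le_one) hf hO
    exact lintegral_sq_mul_rpow_le hk ha.1 (by fun_prop) hv0 hv hf' (hf_primitive hf0)

/-- Special case of the weighted Hardy inequality with the weight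
`w(s,Y) = Y^{-a}(1+s^{-β}Y)^{-m}`: the constant is independent of `s` for `s` large. -/
theorem hardy_special_weights (k a beta : ℝ) (m : ℕ)
    (hk : 2 ≤ k) (ha : a ∈ Ioo (0:ℝ) 1) (hbeta : 0 < beta) :
    ∃ C : ℝ, 0 < C ∧ ∃ S0 : ℝ, 0 < S0 ∧
      ∀ s : ℝ, S0 ≤ s →
        ∀ f f' : ℝ → ℝ,
          (∀ x : ℝ, 0 ≤ x → IntervalIntegrable f' volume 0 x) →
          (∀ x : ℝ, 0 ≤ x → f x = f 0 + ∫ t in (0:ℝ)..x, f' t) →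
          ((f 0 = 0 →
            (∫⁻ Y in Ioi (0:ℝ), ENNReal.ofReal
                ((f Y) ^ 2 * (1 + Y) ^ (-k) * (Y ^ (-a) * (1 + s ^ (-beta) * Y) ^ (-(m:ℝ)))))
              ≤ ENNReal.ofReal C * ∫⁻ Y in Ioi (0:ℝ), ENNReal.ofReal
                ((f' Y) ^ 2 * (1 + Y) ^ (-(k - 2)) * (Y ^ (-a) * (1 + s ^ (-beta) * Y) ^ (-(m:ℝ)))))
          ∧ ((f =O[nhdsWithin 0 (Ioi 0)] fun Y => Y ^ (k / 2)) →
            (∫⁻ Y in Ioi (0:ℝ), ENNReal.ofReal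
                ((f Y) ^ 2 * Y ^ (-k) * (Y ^ (-a) * (1 + s ^ (-beta) * Y) ^ (-(m:ℝ)))))
              ≤ ENNReal.ofReal C * ∫⁻ Y in Ioi (0:ℝ), ENNReal.ofReal
                ((f' Y) ^ 2 * Y ^ (-(k - 2)) * (Y ^ (-a) * (1 + s ^ (-beta) * Y) ^ (-(m:ℝ)))))) :=
  hardy_special_weights_general k a beta m hk ha
end

section
/- Let a > 0, m > 1, β > 1/4. For every δ > 0 there exists S0 > 0 (depending on δ, a, β, m) such that the following holds for every s ≥ S0. Let b ∈ [1/(2s), 2/s], let U : (0,∞) → (0,∞) be measurable with U(Y) ≤ Y + Y²/2 for all Y > 0, and let f ∈ L^∞([0,∞)) with f(Y) = O(Y) as Y → 0. Then, with w(s,Y) = Y^{-a}·(1+s^{-β}·Y)^{-m}: b·∫_0^∞ f²/(1+Y)·w(s,Y) dY ≤ δ·b·∫_0^∞ f²·w(s,Y) dY + δ·∫_0^∞ f²/U²·w(s,Y) dY. -/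
set_option maxHeartbeats 1000000

open Set MeasureTheory Filter Asymptotics
open scoped Topology ENNReal

/-- Absorption estimate: for `s` large, terms of size `b·f²/(1+Y)` (weighted by
`w(s,Y) = Y^{-a}(1+s^{-β}Y)^{-m}`) are absorbed by `δ·b·f²` and `δ·f²/U²`. -/
theorem absorption_estimate (a m beta : ℝ) (ha : 0 < a) (hm : 1 < m) (hbeta : 1/4 < beta) :
    ∀ delta : ℝ, 0 < delta →
      ∃ S0 : ℝ, 0 < S0 ∧
        ∀ s : ℝ, S0 ≤ s →
          ∀ b : ℝ, 1 / (2 * s) ≤ b → b ≤ 2 / s →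
            ∀ U : ℝ → ℝ, Measurable U → (∀ Y > (0:ℝ), 0 < U Y) →
              (∀ Y > (0:ℝ), U Y ≤ Y + Y ^ 2 / 2) →
              ∀ f : ℝ → ℝ, Measurable f → (∃ Cf : ℝ, ∀ Y ≥ (0:ℝ), |f Y| ≤ Cf) →
                (f =O[nhdsWithin 0 (Ioi 0)] fun Y => Y) →
                ENNReal.ofReal b * ∫⁻ Y in Ioi (0:ℝ), ENNReal.ofReal
                    ((f Y) ^ 2 / (1 + Y) * (Y ^ (-a) * (1 + s ^ (-beta) * Y) ^ (-m)))
                  ≤ ENNReal.ofReal (delta * b) * (∫⁻ Y in Ioi (0:ℝ), ENNReal.ofReal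
                      ((f Y) ^ 2 * (Y ^ (-a) * (1 + s ^ (-beta) * Y) ^ (-m))))
                    + ENNReal.ofReal delta * ∫⁻ Y in Ioi (0:ℝ), ENNReal.ofReal
                      ((f Y) ^ 2 / (U Y) ^ 2 * (Y ^ (-a) * (1 + s ^ (-beta) * Y) ^ (-m))) := by
  intro delta hδ
  set Y0 : ℝ := max 0 (1 / delta - 1) with hY0def
  have hY00 : 0 ≤ Y0 := le_max_left _ _
  set C : ℝ := Y0 + Y0 ^ 2 / 2 + 1 with hCdef
  have hC0 : 0 < C := by rw [hCdef]; nlinarith [sq_nonneg Y0]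
  refine ⟨max 1 (2 * C ^ 2 / delta), lt_of_lt_of_le one_pos (le_max_left _ _), ?_⟩
  intro s hs b hb1 hb2 U hU hUpos hUle f hf _ _
  have hs1 : (1:ℝ) ≤ s := le_trans (le_max_left _ _) hs
  have hs0 : (0:ℝ) < s := lt_of_lt_of_le one_pos hs1
  have hb0 : 0 < b := lt_of_lt_of_le (by positivity) hb1
  -- key pointwise inequality
  have key : ∀ Y ∈ Ioi (0:ℝ),
      b * (f Y ^ 2 / (1 + Y) * (Y ^ (-a) * (1 + s ^ (-beta) * Y) ^ (-m)))
        ≤ delta * b * (f Y ^ 2 * (Y ^ (-a) * (1 + s ^ (-beta) * Y) ^ (-m)))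
          + delta * (f Y ^ 2 / (U Y) ^ 2 * (Y ^ (-a) * (1 + s ^ (-beta) * Y) ^ (-m))) := by
    intro Y hY
    simp only [mem_Ioi] at hY
    have hUY : 0 < U Y := hUpos Y hY
    have h1Y : (0:ℝ) < 1 + Y := by linarith
    set w : ℝ := Y ^ (-a) * (1 + s ^ (-beta) * Y) ^ (-m) with hwdef
    have hw : 0 ≤ w := by
      have h1 : (0:ℝ) < 1 + s ^ (-beta) * Y := by positivity
      positivity
    set F : ℝ := f Y ^ 2 with hFdef
    have hF : 0 ≤ F := sq_nonneg _
    rcases le_or_gt Y0 Y with hle | hlt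
    · -- large Y : absorb into the zero-order term
      have hd : 1 / (1 + Y) ≤ delta := by
        rw [div_le_iff₀ h1Y]
        have h2 : 1 / delta - 1 ≤ Y := le_trans (le_max_right _ _) hle
        have h3 : 1 / delta ≤ 1 + Y := by linarith
        calc (1:ℝ) = delta * (1 / delta) := by field_simp
          _ ≤ delta * (1 + Y) := by nlinarith
      have h4 : 0 ≤ delta * (F / (U Y) ^ 2 * w) := by positivity
      calc b * (F / (1 + Y) * w) = F * w * b * (1 / (1 + Y)) := by ring
        _ ≤ F * w * b * delta := by
            exact mul_le_mul_of_nonneg_left hd (by positivity)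
        _ = delta * b * (F * w) := by ring
        _ ≤ _ := le_add_of_nonneg_right h4
    · -- small Y : absorb into the dissipation term
      have hUC : U Y ≤ C := by
        have h1 := hUle Y hY
        have hY2 : Y ^ 2 ≤ Y0 ^ 2 := by nlinarith
        rw [hCdef]; nlinarith
      have hbU : b * (U Y) ^ 2 ≤ delta := by
        have h2 : 2 * C ^ 2 / delta ≤ s := le_trans (le_max_right _ _) hs
        have h3 : 2 * C ^ 2 ≤ delta * s := by
          rw [div_le_iff₀ hδ] at h2; nlinarith
        have hbs : b * s ≤ 2 := by
          rw [le_div_iff₀ hs0] at hb2; linarith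
        have hU2 : (U Y) ^ 2 ≤ C ^ 2 := pow_le_pow_left₀ hUY.le hUC 2
        have hbC : b * C ^ 2 ≤ delta := by
          nlinarith [mul_le_mul_of_nonneg_right hbs (sq_nonneg C)]
        exact le_trans (mul_le_mul_of_nonneg_left hU2 hb0.le) hbC
      have hFe : F / (U Y) ^ 2 * (U Y) ^ 2 = F := div_mul_cancel₀ F (by positivity)
      have hdiv : F / (1 + Y) ≤ F := div_le_self hF (by linarith)
      have h5 : 0 ≤ delta * b * (F * w) := by positivity
      calc b * (F / (1 + Y) * w)
          ≤ b * (F * w) := by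
            exact mul_le_mul_of_nonneg_left (mul_le_mul_of_nonneg_right hdiv hw) hb0.le
        _ = F / (U Y) ^ 2 * w * (b * (U Y) ^ 2) := by
            rw [show F / (U Y) ^ 2 * w * (b * (U Y) ^ 2)
                = b * (F / (U Y) ^ 2 * (U Y) ^ 2 * w) by ring, hFe]
        _ ≤ F / (U Y) ^ 2 * w * delta := by
            exact mul_le_mul_of_nonneg_left hbU (by positivity)
        _ = delta * (F / (U Y) ^ 2 * w) := by ring
        _ ≤ _ := le_add_of_nonneg_left h5
  -- measurability of the pieces
  have hw_meas : Measurable fun Y : ℝ => Y ^ (-a) * (1 + s ^ (-beta) * Y) ^ (-m) :=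
by fun_prop
  have hmeas1 : Measurable fun Y : ℝ =>
      ENNReal.ofReal (delta * b * (f Y ^ 2 * (Y ^ (-a) * (1 + s ^ (-beta) * Y) ^ (-m)))) :=
    (((hf.pow_const 2).mul hw_meas).const_mul _).ennreal_ofReal
  calc ENNReal.ofReal b * ∫⁻ Y in Ioi (0:ℝ), ENNReal.ofReal
        ((f Y) ^ 2 / (1 + Y) * (Y ^ (-a) * (1 + s ^ (-beta) * Y) ^ (-m)))
      = ∫⁻ Y in Ioi (0:ℝ), ENNReal.ofReal b * ENNReal.ofReal
        ((f Y) ^ 2 / (1 + Y) * (Y ^ (-a) * (1 + s ^ (-beta) * Y) ^ (-m))) :=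
        (lintegral_const_mul' _ _ ENNReal.ofReal_ne_top).symm
    _ ≤ ∫⁻ Y in Ioi (0:ℝ),
        (ENNReal.ofReal (delta * b * (f Y ^ 2 * (Y ^ (-a) * (1 + s ^ (-beta) * Y) ^ (-m))))
          + ENNReal.ofReal (delta * (f Y ^ 2 / (U Y) ^ 2
              * (Y ^ (-a) * (1 + s ^ (-beta) * Y) ^ (-m))))) := by
        refine setLIntegral_mono' measurableSet_Ioi fun Y hY => ?_
        rw [← ENNReal.ofReal_mul hb0.le]
        exact le_trans (ENNReal.ofReal_le_ofReal (key Y hY)) ENNReal.ofReal_add_le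
    _ = (∫⁻ Y in Ioi (0:ℝ), ENNReal.ofReal
          (delta * b * (f Y ^ 2 * (Y ^ (-a) * (1 + s ^ (-beta) * Y) ^ (-m)))))
        + ∫⁻ Y in Ioi (0:ℝ), ENNReal.ofReal
          (delta * (f Y ^ 2 / (U Y) ^ 2 * (Y ^ (-a) * (1 + s ^ (-beta) * Y) ^ (-m)))) :=
        lintegral_add_left hmeas1 _
    _ = _ := by
        congr 1
        · simp_rw [ENNReal.ofReal_mul (by positivity : (0:ℝ) ≤ delta * b)]
          exact lintegral_const_mul' _ _ ENNReal.ofReal_ne_top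
        · simp_rw [ENNReal.ofReal_mul hδ.le]
          exact lintegral_const_mul' _ _ ENNReal.ofReal_ne_top
end

section
/- Let U ∈ C³([0,∞)) with U(0) = 0, U'(0) = 1, U(Y) > 0 for Y > 0, and U''(Y) - 1 = O(Y²) as Y → 0; set D := L_U^{-1}(U'' - 1). For W ∈ C²([0,∞)) with W(Y) = O(Y²) as Y → 0, define C[W] := -∂_Y( D·∫_0^Y W/U² ) + 2·∂_Y( U·∫_0^Y (W·D)/U³ ). Then C[W] = 2·L_U^{-1}( (D/U)·W ) - ∂_Y( (D/U)·∫_0^Y L_U^{-1}W ). -/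
open Set MeasureTheory Filter Asymptotics
open scoped Topology

/-!
Since `W D / U³ = ((D/U) W) / U²`, the second term of `C[W]` is `2 L_U^{-1}((D/U) W)`, and
`D ∫_0^Y W/U² = (D/U) · U(Y) ∫_0^Y W/U²`. So everything reduces to
`∫_0^Y L_U^{-1} W = U(Y) ∫_0^Y W/U²`, the fundamental theorem of calculus for
`F = U ∫_0^Y W/U²`. It applies because `U(Y) ≍ Y` and `W = O(Y²)` make `W/U²` bounded near `0`:
then `F → 0` at `0⁺`, and `F' = U' ∫_0^Y W/U² + W/U` is bounded near `0`, hence integrable.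
-/

/-- The operator `L_U^{-1}`, defined by `(L_U^{-1} f)(Y) = d/dY (U(Y)·∫_0^Y f/U²)`. -/
noncomputable def LUinv (U f : ℝ → ℝ) : ℝ → ℝ :=
  deriv fun Z => U Z * ∫ z in (0:ℝ)..Z, f z / (U z) ^ 2

theorem HasDerivWithinAt.isBigO_sub_rev {𝕜 F : Type*} [NontriviallyNormedField 𝕜]
    [NormedAddCommGroup F] [NormedSpace 𝕜 F] {f : 𝕜 → F} {f' : F} {s : Set 𝕜} {a : 𝕜}
    (hf : HasDerivWithinAt f f' s a) (hf' : f' ≠ 0) :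
    (fun x => x - a) =O[𝓝[s] a] fun x => f x - f a := by
  have hpair : Tendsto (fun x : 𝕜 => (x, a)) (𝓝[s] a) (𝓝[s] a ×ˢ pure a) :=
    tendsto_id.prodMk tendsto_const_pure
  exact (HasDerivAtFilter.isTheta_sub hf hf').isBigO_symm.comp_tendsto hpair

section BoundedNearLeftEndpoint

variable {E : Type*} [NormedAddCommGroup E] {f : ℝ → E} {a b : ℝ}

theorem intervalIntegrable_of_continuousOn_Ioc_of_isBigO_one (hab : a ≤ b)
    (hf : ContinuousOn f (Ioc a b)) (hb : f =O[𝓝[>] a] (fun _ => (1 : ℝ))) :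
    IntervalIntegrable f volume a b := by
  rcases hab.eq_or_lt with rfl | hab
  · exact .refl
  obtain ⟨C, hC⟩ := hb.bound
  obtain ⟨c, hac, hc⟩ := mem_nhdsGT_iff_exists_Ioc_subset.mp hC
  set c' := min c b
  have hac' : a < c' := lt_min hac hab
  have near : IntervalIntegrable f volume a c' := by
    rw [intervalIntegrable_iff_integrableOn_Ioc_of_le hac'.le]
    refine .of_bound measure_Ioc_lt_top
      ((hf.mono (Ioc_subset_Ioc_right (min_le_right _ _))).aestronglyMeasurable measurableSet_Ioc)
      C ((ae_restrict_mem measurableSet_Ioc).mono fun x hx => ?_)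
    simpa using hc (Ioc_subset_Ioc_right (min_le_left _ _) hx)
  have far : IntervalIntegrable f volume c' b :=
    (hf.mono (Icc_subset_Ioc_iff (min_le_right _ _) |>.2 ⟨hac', le_rfl⟩)).intervalIntegrable_of_Icc
      (min_le_right _ _)
  exact near.trans far

variable [NormedSpace ℝ E]

theorem isBigO_integral_of_isBigO_one (hb : f =O[𝓝[>] a] (fun _ => (1 : ℝ))) :
    (fun x => ∫ t in a..x, f t) =O[𝓝[>] a] fun x => x - a := by
  obtain ⟨C, hC⟩ := hb.bound
  obtain ⟨c, hac, hc⟩ := mem_nhdsGT_iff_exists_Ioc_subset.mp hC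
  refine IsBigO.of_bound C ?_
  filter_upwards [Ioc_mem_nhdsGT hac] with x hx
  have hbound : ∀ t ∈ uIoc a x, ‖f t‖ ≤ C := fun t ht => by
    rw [uIoc_of_le hx.1.le] at ht
    simpa using hc ⟨ht.1, ht.2.trans hx.2⟩
  simpa [Real.norm_eq_abs, abs_sub_comm] using
    intervalIntegral.norm_integral_le_of_norm_le_const hbound

theorem hasDerivAt_integral_of_continuousOn_of_isBigO_one [CompleteSpace E]
    (hf : ContinuousOn f (Ioi a)) (hb : f =O[𝓝[>] a] (fun _ => (1 : ℝ))) {x : ℝ} (hx : a < x) :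
    HasDerivAt (fun x => ∫ t in a..x, f t) (f x) x :=
  intervalIntegral.integral_hasDerivAt_right
    (intervalIntegrable_of_continuousOn_Ioc_of_isBigO_one hx.le (hf.mono Ioc_subset_Ioi_self) hb)
    (hf.stronglyMeasurableAtFilter isOpen_Ioi x hx) (hf.continuousAt (Ioi_mem_nhds hx))

theorem isBigO_one_deriv_of_contDiffOn_Ici (hf : ContDiffOn ℝ 1 f (Ici a)) :
    deriv f =O[𝓝[>] a] (fun _ => (1 : ℝ)) := by
  have hlim := (hf.continuousOn_derivWithin (uniqueDiffOn_Ici a) le_rfl a self_mem_Ici).tendsto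
  refine ((hlim.mono_left (nhdsWithin_mono _ Ioi_subset_Ici_self)).isBigO_one ℝ).congr' ?_ .rfl
  filter_upwards [self_mem_nhdsWithin] with x hx
  exact derivWithin_of_mem_nhds (Ici_mem_nhds hx)

theorem integral_deriv_eq_sub_of_tendsto_of_isBigO_one [CompleteSpace E] {c : E} (hab : a < b)
    (hf : ∀ x > a, DifferentiableAt ℝ f x) (hf'_cont : ContinuousOn (deriv f) (Ioi a))
    (hf'_bdd : deriv f =O[𝓝[>] a] (fun _ => (1 : ℝ))) (hlim : Tendsto f (𝓝[>] a) (𝓝 c)) :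
    ∫ x in a..b, deriv f x = f b - c :=
  intervalIntegral.integral_eq_sub_of_hasDerivAt_of_tendsto hab
    (fun x hx => (hf x hx.1).hasDerivAt)
    (intervalIntegrable_of_continuousOn_Ioc_of_isBigO_one hab.le
      (hf'_cont.mono Ioc_subset_Ioi_self) hf'_bdd)
    hlim ((hf b hab).continuousAt.tendsto.mono_left nhdsWithin_le_nhds)

end BoundedNearLeftEndpoint

theorem integral_LUinv_eq {U W : ℝ → ℝ} (hU : ContDiffOn ℝ 1 U (Ici 0)) (hU0 : U 0 = 0)
    (hUpos : ∀ Y > (0:ℝ), 0 < U Y) (hW : ContinuousOn W (Ioi 0))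
    (hWU : W =O[𝓝[>] 0] fun Y => U Y ^ 2) {Z : ℝ} (hZ : 0 < Z) :
    ∫ z in (0:ℝ)..Z, LUinv U W z = U Z * ∫ z in (0:ℝ)..Z, W z / U z ^ 2 := by
  set h : ℝ → ℝ := fun z => W z / U z ^ 2
  set I : ℝ → ℝ := fun x => ∫ z in (0:ℝ)..x, h z
  set F : ℝ → ℝ := fun x => U x * I x
  set F' : ℝ → ℝ := fun x => deriv U x * I x + U x * h x
  have hU_cont : ContinuousOn U (Ioi 0) := hU.continuousOn.mono Ioi_subset_Ici_self
  have hU_lim : Tendsto U (𝓝[>] 0) (𝓝 0) := by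
    simpa [hU0] using (hU.continuousOn 0 self_mem_Ici).tendsto.mono_left
      (nhdsWithin_mono _ Ioi_subset_Ici_self)
  have h_cont : ContinuousOn h (Ioi 0) :=
    hW.div (hU_cont.pow 2) fun x hx => (pow_pos (hUpos x hx) 2).ne'
  have h_bdd : h =O[𝓝[>] 0] (fun _ => (1 : ℝ)) := by
    refine (hWU.mul (isBigO_refl (fun x => (U x ^ 2)⁻¹) _)).trans_eventuallyEq ?_
    filter_upwards [self_mem_nhdsWithin] with x hx
    exact mul_inv_cancel₀ (pow_pos (hUpos x hx) 2).ne'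
  have hI_deriv : ∀ x > (0:ℝ), HasDerivAt I (h x) x := fun x hx =>
    hasDerivAt_integral_of_continuousOn_of_isBigO_one h_cont h_bdd hx
  have hI_bdd : I =O[𝓝[>] 0] (fun _ => (1 : ℝ)) :=
    (isBigO_integral_of_isBigO_one h_bdd).trans_tendsto_nhds (F := ℝ) (y := 0)
      (((continuous_sub_right 0).tendsto' 0 0 (sub_self 0)).mono_left nhdsWithin_le_nhds)
  have hF_deriv : ∀ x > (0:ℝ), HasDerivAt F (F' x) x := fun x hx =>
    ((hU.differentiableOn one_ne_zero x hx.le).differentiableAt (Ici_mem_nhds hx)).hasDerivAt.mul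
      (hI_deriv x hx)
  have hF'_cont : ContinuousOn F' (Ioi 0) := by
    have hdU : ContinuousOn (deriv U) (Ioi 0) :=
      (hU.mono Ioi_subset_Ici_self).continuousOn_deriv_of_isOpen isOpen_Ioi le_rfl
    have hI : ContinuousOn I (Ioi 0) := fun x hx => (hI_deriv x hx).continuousAt.continuousWithinAt
    exact (hdU.mul hI).add (hU_cont.mul h_cont)
  have hF'_bdd : F' =O[𝓝[>] 0] (fun _ => (1 : ℝ)) := by
    simpa using ((isBigO_one_deriv_of_contDiffOn_Ici hU).mul hI_bdd).add
      ((hU_lim.isBigO_one ℝ).mul h_bdd)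
  have hF_lim : Tendsto F (𝓝[>] 0) (𝓝 0) :=
    hU_lim.zero_mul_isBoundedUnder_le ((isBigO_one_iff ℝ).mp hI_bdd)
  have hF'_eq : EqOn (deriv F) F' (Ioi 0) := fun x hx => (hF_deriv x hx).deriv
  calc ∫ z in (0:ℝ)..Z, LUinv U W z = F Z - 0 :=
        integral_deriv_eq_sub_of_tendsto_of_isBigO_one hZ
          (fun x hx => (hF_deriv x hx).differentiableAt) (hF'_cont.congr hF'_eq)
          (hF'_bdd.congr' (eventuallyEq_nhdsWithin_of_eqOn hF'_eq).symm .rfl) hF_lim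
    _ = U Z * ∫ z in (0:ℝ)..Z, W z / U z ^ 2 := sub_zero _

theorem commutator_formula_general
    (U : ℝ → ℝ) (hU : ContDiffOn ℝ 3 U (Ici 0))
    (hU0 : U 0 = 0) (hU1 : derivWithin U (Ici 0) 0 = 1)
    (hUpos : ∀ Y > (0:ℝ), 0 < U Y)
    (W : ℝ → ℝ) (hW : ContDiffOn ℝ 2 W (Ici 0))
    (hWO : W =O[nhdsWithin 0 (Ioi 0)] fun Y => Y ^ 2) :
    ∀ Y > (0:ℝ),
      -deriv (fun Z => LUinv U (fun t => iteratedDeriv 2 U t - 1) Z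
          * ∫ z in (0:ℝ)..Z, W z / (U z) ^ 2) Y
        + 2 * deriv (fun Z => U Z
            * ∫ z in (0:ℝ)..Z, W z * LUinv U (fun t => iteratedDeriv 2 U t - 1) z / (U z) ^ 3) Y
      = 2 * LUinv U (fun z => LUinv U (fun t => iteratedDeriv 2 U t - 1) z / U z * W z) Y
        - deriv (fun Z => LUinv U (fun t => iteratedDeriv 2 U t - 1) Z / U Z
            * ∫ z in (0:ℝ)..Z, LUinv U W z) Y := by
  intro Y hY
  set D := LUinv U (fun t => iteratedDeriv 2 U t - 1)
  have hU_lin : (fun x => x) =O[𝓝[>] 0] U := by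
    have hd : HasDerivWithinAt U 1 (Ici 0) 0 :=
      hU1 ▸ (hU.differentiableOn (by norm_num) 0 self_mem_Ici).hasDerivWithinAt
    simpa [hU0] using (hd.isBigO_sub_rev one_ne_zero).mono (nhdsWithin_mono _ Ioi_subset_Ici_self)
  have h_int : ∀ Z > (0:ℝ), ∫ z in (0:ℝ)..Z, LUinv U W z = U Z * ∫ z in (0:ℝ)..Z, W z / U z ^ 2 :=
    fun Z hZ => integral_LUinv_eq (hU.of_le (by norm_num)) hU0 hUpos
      (hW.continuousOn.mono Ioi_subset_Ici_self) (hWO.trans (hU_lin.pow 2)) hZ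
  have hD_term : deriv (fun Z => D Z * ∫ z in (0:ℝ)..Z, W z / U z ^ 2) Y
      = deriv (fun Z => D Z / U Z * ∫ z in (0:ℝ)..Z, LUinv U W z) Y := by
    refine Filter.EventuallyEq.deriv_eq ?_
    filter_upwards [Ioi_mem_nhds hY] with Z hZ
    rw [h_int Z hZ]
    field_simp [(hUpos Z hZ).ne']
  have hU_term : (fun Z => U Z * ∫ z in (0:ℝ)..Z, W z * D z / U z ^ 3)
      = fun Z => U Z * ∫ z in (0:ℝ)..Z, (D z / U z * W z) / U z ^ 2 := by
    funext Z
    congr 1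
    exact intervalIntegral.integral_congr fun z _ => by ring
  rw [hD_term, hU_term]
  unfold LUinv
  ring

/-- Alternative formula for the commutator operator
`C[W] = -∂_Y(D·∫_0^Y W/U²) + 2∂_Y(U·∫_0^Y WD/U³)`, where `D = L_U^{-1}(U''-1)`. -/
theorem commutator_formula
    (U : ℝ → ℝ) (hU : ContDiffOn ℝ 3 U (Ici 0))
    (hU0 : U 0 = 0) (hU1 : derivWithin U (Ici 0) 0 = 1)
    (hUpos : ∀ Y > (0:ℝ), 0 < U Y)
    (hUYY : (fun Y => iteratedDeriv 2 U Y - 1) =O[nhdsWithin 0 (Ioi 0)] fun Y => Y ^ 2)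
    (W : ℝ → ℝ) (hW : ContDiffOn ℝ 2 W (Ici 0))
    (hWO : W =O[nhdsWithin 0 (Ioi 0)] fun Y => Y ^ 2) :
    ∀ Y > (0:ℝ),
      -deriv (fun Z => LUinv U (fun t => iteratedDeriv 2 U t - 1) Z
          * ∫ z in (0:ℝ)..Z, W z / (U z) ^ 2) Y
        + 2 * deriv (fun Z => U Z
            * ∫ z in (0:ℝ)..Z, W z * LUinv U (fun t => iteratedDeriv 2 U t - 1) z / (U z) ^ 3) Y
      = 2 * LUinv U (fun z => LUinv U (fun t => iteratedDeriv 2 U t - 1) z / U z * W z) Y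
        - deriv (fun Z => LUinv U (fun t => iteratedDeriv 2 U t - 1) Z / U Z
            * ∫ z in (0:ℝ)..Z, LUinv U W z) Y :=
  commutator_formula_general U hU hU0 hU1 hUpos W hW hWO
end

section
/- Let I be an interval, b : I → ℝ continuous, and let W = W(s,ψ) > 0 be C¹ in s and C⁴ in ψ on an open subset of I×(0,∞), satisfying ∂_sW - 2b·W + (3b/2)·ψ·∂_ψW - √W·∂_ψ²W = -2. Then the function F := √W·∂_ψ²W - 2 satisfies ∂_sF - (1/(2W))·F·(F+2) + (3b/2)·ψ·∂_ψF - √W·∂_ψ²F = 0 on the same set. -/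
/-!
Write the equation as `∂ₛW = 2bW - (3b/2)ψ∂_ψW + F`. Differentiating it twice in `ψ` (the
weight `ψ` produces an extra `2∂_ψ²W`) and commuting the mixed partials gives
`∂ₛ∂_ψ²W = -b∂_ψ²W - (3b/2)ψ∂_ψ³W + ∂_ψ²F`. Substituting both into
`∂ₛF = ∂ₛW·∂_ψ²W/(2√W) + √W·∂ₛ∂_ψ²W`, the `F`-part of `∂ₛW` yields `F(F+2)/(2W)` because
`√W·∂_ψ²W = F + 2`, the remaining `ψ`-terms assemble into `-(3b/2)ψ∂_ψF`, and `√W·∂_ψ²F` is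
what is left.
-/

open Set MeasureTheory Filter
open scoped Topology

/-- `F = √W·∂_ψ²W - 2`, the quantity corresponding to `2(∂_Y²U - 1)` in von Mises
variables. -/
noncomputable def Fvm (W : ℝ → ℝ → ℝ) (s psi : ℝ) : ℝ :=
  Real.sqrt (W s psi) * iteratedDeriv 2 (W s) psi - 2

theorem ContDiffOn.differentiableAt_of_isOpen {E F : Type*} [NormedAddCommGroup E]
    [NormedSpace ℝ E] [NormedAddCommGroup F] [NormedSpace ℝ F] {g : E → F} {Ω : Set E}
    {n : WithTop ℕ∞} (hg : ContDiffOn ℝ n g Ω) (hΩ : IsOpen Ω) (hn : n ≠ 0) {x : E}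
    (hx : x ∈ Ω) : DifferentiableAt ℝ g x :=
  (hg.differentiableOn hn).differentiableAt (hΩ.mem_nhds hx)

/- Partial derivatives are taken along coordinate lines, so that they agree definitionally with
the one-variable `deriv`s of the statement. -/
noncomputable def partialFst (g : ℝ × ℝ → ℝ) (x : ℝ × ℝ) : ℝ :=
  deriv (fun s => g (s, x.2)) x.1

noncomputable def partialSnd (g : ℝ × ℝ → ℝ) (x : ℝ × ℝ) : ℝ :=
  deriv (fun t => g (x.1, t)) x.2

section Partials

variable {g h k : ℝ × ℝ → ℝ} {x : ℝ × ℝ}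

theorem DifferentiableAt.hasDerivAt_fderiv_fst (hg : DifferentiableAt ℝ g x) :
    HasDerivAt (fun s => g (s, x.2)) (fderiv ℝ g x (1, 0)) x.1 :=
  hg.hasFDerivAt.comp_hasDerivAt_of_eq _
    ((hasDerivAt_id _).prodMk (hasDerivAt_const _ _)) (by simp)

theorem DifferentiableAt.hasDerivAt_fderiv_snd (hg : DifferentiableAt ℝ g x) :
    HasDerivAt (fun t => g (x.1, t)) (fderiv ℝ g x (0, 1)) x.2 :=
  hg.hasFDerivAt.comp_hasDerivAt_of_eq _
    ((hasDerivAt_const _ _).prodMk (hasDerivAt_id _)) (by simp)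

theorem DifferentiableAt.partialFst_eq (hg : DifferentiableAt ℝ g x) :
    partialFst g x = fderiv ℝ g x (1, 0) :=
  hg.hasDerivAt_fderiv_fst.deriv

theorem DifferentiableAt.partialSnd_eq (hg : DifferentiableAt ℝ g x) :
    partialSnd g x = fderiv ℝ g x (0, 1) :=
  hg.hasDerivAt_fderiv_snd.deriv

theorem DifferentiableAt.hasDerivAt_partialFst (hg : DifferentiableAt ℝ g x) :
    HasDerivAt (fun s => g (s, x.2)) (partialFst g x) x.1 :=
  hg.partialFst_eq ▸ hg.hasDerivAt_fderiv_fst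

theorem DifferentiableAt.hasDerivAt_partialSnd (hg : DifferentiableAt ℝ g x) :
    HasDerivAt (fun t => g (x.1, t)) (partialSnd g x) x.2 :=
  hg.partialSnd_eq ▸ hg.hasDerivAt_fderiv_snd

theorem Filter.EventuallyEq.partialFst_eq (hgk : g =ᶠ[𝓝 x] k) :
    partialFst g x = partialFst k x :=
  (hgk.comp_tendsto ((continuous_id.prodMk continuous_const).tendsto' x.1 x rfl)).deriv_eq

theorem Filter.EventuallyEq.partialSnd_eq (hgk : g =ᶠ[𝓝 x] k) :
    partialSnd g x = partialSnd k x :=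
  (hgk.comp_tendsto ((continuous_const.prodMk continuous_id).tendsto' x.2 x rfl)).deriv_eq

theorem Filter.EventuallyEq.partialSnd (hgk : g =ᶠ[𝓝 x] k) :
    partialSnd g =ᶠ[𝓝 x] partialSnd k :=
  hgk.eventuallyEq_nhds.mono fun _ hy => hy.partialSnd_eq

theorem ContDiffOn.partialSnd {Ω : Set (ℝ × ℝ)} {m n : WithTop ℕ∞} (hg : ContDiffOn ℝ n g Ω)
    (hΩ : IsOpen Ω) (hmn : m + 1 ≤ n) : ContDiffOn ℝ m (partialSnd g) Ω := by
  have hn : n ≠ 0 := by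
    rintro rfl
    simp at hmn
  exact ((hg.fderiv_of_isOpen hΩ hmn).clm_apply contDiffOn_const).congr fun y hy =>
    (hg.differentiableAt_of_isOpen hΩ hn hy).partialSnd_eq

theorem ContDiffAt.partialFst_partialSnd_comm (hg : ContDiffAt ℝ 2 g x) :
    partialFst (partialSnd g) x = partialSnd (partialFst g) x := by
  have hdiff : ∀ᶠ y in 𝓝 x, DifferentiableAt ℝ g y :=
    (hg.eventually (by simp)).mono fun y hy => hy.differentiableAt (by simp)
  have hd : DifferentiableAt ℝ (fderiv ℝ g) x :=
    (hg.fderiv_right (m := 1) (by norm_num)).differentiableAt (by norm_num)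
  have happly : ∀ v w : ℝ × ℝ, fderiv ℝ (fun y => fderiv ℝ g y v) x w
      = fderiv ℝ (fderiv ℝ g) x w v := fun v w => by
    simp [fderiv_clm_apply hd (differentiableAt_const v)]
  have hdv : ∀ v : ℝ × ℝ, DifferentiableAt ℝ (fun y => fderiv ℝ g y v) x :=
    fun v => hd.clm_apply (differentiableAt_const v)
  calc partialFst (partialSnd g) x = partialFst (fun y => fderiv ℝ g y (0, 1)) x :=
        Filter.EventuallyEq.partialFst_eq (hdiff.mono fun y hy => hy.partialSnd_eq)
    _ = fderiv ℝ (fderiv ℝ g) x (1, 0) (0, 1) := by rw [(hdv _).partialFst_eq, happly]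
    _ = fderiv ℝ (fderiv ℝ g) x (0, 1) (1, 0) := hg.isSymmSndFDerivAt (by simp) _ _
    _ = partialSnd (fun y => fderiv ℝ g y (1, 0)) x := by rw [(hdv _).partialSnd_eq, happly]
    _ = partialSnd (partialFst g) x :=
        (Filter.EventuallyEq.partialSnd_eq (hdiff.mono fun y hy => hy.partialFst_eq)).symm

theorem partialFst_sqrt_mul_sub (hg : DifferentiableAt ℝ g x) (hh : DifferentiableAt ℝ h x)
    (hgx : g x ≠ 0) (c : ℝ) :
    partialFst (fun y => √(g y) * h y - c) x
      = partialFst g x / (2 * √(g x)) * h x + √(g x) * partialFst h x :=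
  (((hg.hasDerivAt_partialFst.sqrt hgx).mul hh.hasDerivAt_partialFst).sub_const c).deriv

theorem partialSnd_sqrt_mul_sub (hg : DifferentiableAt ℝ g x) (hh : DifferentiableAt ℝ h x)
    (hgx : g x ≠ 0) (c : ℝ) :
    partialSnd (fun y => √(g y) * h y - c) x
      = partialSnd g x / (2 * √(g x)) * h x + √(g x) * partialSnd h x :=
  (((hg.hasDerivAt_partialSnd.sqrt hgx).mul hh.hasDerivAt_partialSnd).sub_const c).deriv

theorem partialSnd_affine (α β : ℝ → ℝ) (hg : DifferentiableAt ℝ g x)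
    (hh : DifferentiableAt ℝ h x) (hk : DifferentiableAt ℝ k x) :
    partialSnd (fun y => α y.1 * g y + β y.1 * (y.2 * h y) + k y) x
      = α x.1 * partialSnd g x + β x.1 * (h x + x.2 * partialSnd h x) + partialSnd k x := by
  have := ((hg.hasDerivAt_partialSnd.const_mul (α x.1)).add
    (((hasDerivAt_id' x.2).mul hh.hasDerivAt_partialSnd).const_mul (β x.1))).add
    hk.hasDerivAt_partialSnd
  exact this.deriv.trans (by simp)

end Partials

theorem iteratedDeriv_two_eq_partialSnd_partialSnd (W : ℝ → ℝ → ℝ) (s t : ℝ) :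
    iteratedDeriv 2 (W s) t = partialSnd (partialSnd (Function.uncurry W)) (s, t) := by
  rw [iteratedDeriv_succ, iteratedDeriv_one]
  rfl

theorem partialFst_partialSnd_partialSnd_comm {f : ℝ × ℝ → ℝ} {Ω : Set (ℝ × ℝ)}
    (hΩ : IsOpen Ω) (hf : ContDiffOn ℝ 3 f Ω) {x : ℝ × ℝ} (hx : x ∈ Ω) :
    partialFst (partialSnd (partialSnd f)) x = partialSnd (partialSnd (partialFst f)) x := by
  have hf₂ : ContDiffOn ℝ 2 (partialSnd f) Ω := hf.partialSnd hΩ (by norm_num)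
  have hcomm : partialFst (partialSnd f) =ᶠ[𝓝 x] partialSnd (partialFst f) :=
    eventually_of_mem (hΩ.mem_nhds hx) fun y hy =>
      ((hf.contDiffAt (hΩ.mem_nhds hy)).of_le (by norm_num)).partialFst_partialSnd_comm
  rw [(hf₂.contDiffAt (hΩ.mem_nhds hx)).partialFst_partialSnd_comm, hcomm.partialSnd_eq]

theorem partialSnd_partialSnd_affine_partialSnd (α β : ℝ → ℝ) {f k : ℝ × ℝ → ℝ}
    {Ω : Set (ℝ × ℝ)} (hΩ : IsOpen Ω) (hf : ContDiffOn ℝ 3 f Ω) (hk : ContDiffOn ℝ 2 k Ω)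
    {x : ℝ × ℝ} (hx : x ∈ Ω) :
    partialSnd (partialSnd fun y => α y.1 * f y + β y.1 * (y.2 * partialSnd f y) + k y) x
      = (α x.1 + 2 * β x.1) * partialSnd (partialSnd f) x
        + β x.1 * (x.2 * partialSnd (partialSnd (partialSnd f)) x)
        + partialSnd (partialSnd k) x := by
  have hf₂ : ContDiffOn ℝ 2 (partialSnd f) Ω := hf.partialSnd hΩ (by norm_num)
  have hf₂₂ : ContDiffOn ℝ 1 (partialSnd (partialSnd f)) Ω := hf₂.partialSnd hΩ (by norm_num)
  have hk₂ : ContDiffOn ℝ 1 (partialSnd k) Ω := hk.partialSnd hΩ (by norm_num)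
  have hfirst : (partialSnd fun y => α y.1 * f y + β y.1 * (y.2 * partialSnd f y) + k y)
      =ᶠ[𝓝 x] fun y => (α y.1 + β y.1) * partialSnd f y
        + β y.1 * (y.2 * partialSnd (partialSnd f) y) + partialSnd k y :=
    eventually_of_mem (hΩ.mem_nhds hx) fun y hy => by
      rw [partialSnd_affine α β (hf.differentiableAt_of_isOpen hΩ (by simp) hy)
        (hf₂.differentiableAt_of_isOpen hΩ (by simp) hy)
        (hk.differentiableAt_of_isOpen hΩ (by simp) hy)]
      ring
  rw [hfirst.partialSnd_eq, partialSnd_affine (fun s => α s + β s) β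
    (hf₂.differentiableAt_of_isOpen hΩ (by simp) hx)
    (hf₂₂.differentiableAt_of_isOpen hΩ (by simp) hx)
    (hk₂.differentiableAt_of_isOpen hΩ (by simp) hx)]
  ring

noncomputable def uncurriedFvm (f : ℝ × ℝ → ℝ) (x : ℝ × ℝ) : ℝ :=
  √(f x) * partialSnd (partialSnd f) x - 2

theorem uncurry_Fvm (W : ℝ → ℝ → ℝ) :
    Function.uncurry (Fvm W) = uncurriedFvm (Function.uncurry W) := by
  funext x
  simp only [Function.uncurry, Fvm, uncurriedFvm, iteratedDeriv_two_eq_partialSnd_partialSnd]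

theorem uncurriedFvm_equation {b : ℝ → ℝ} {Ω : Set (ℝ × ℝ)} (hΩ : IsOpen Ω) {f : ℝ × ℝ → ℝ}
    (hpos : ∀ x ∈ Ω, 0 < f x) (hf : ContDiffOn ℝ 4 f Ω)
    (hs : ∀ x ∈ Ω, partialFst f x
      = 2 * b x.1 * f x + -(3 * b x.1 / 2) * (x.2 * partialSnd f x) + uncurriedFvm f x)
    {x : ℝ × ℝ} (hx : x ∈ Ω) :
    partialFst (uncurriedFvm f) x
      - 1 / (2 * f x) * uncurriedFvm f x * (uncurriedFvm f x + 2)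
      + 3 * b x.1 / 2 * x.2 * partialSnd (uncurriedFvm f) x
      - √(f x) * partialSnd (partialSnd (uncurriedFvm f)) x = 0 := by
  have hf₂₂ : ContDiffOn ℝ 2 (partialSnd (partialSnd f)) Ω :=
    (hf.partialSnd hΩ (m := 3) (by norm_num)).partialSnd hΩ (by norm_num)
  have hF : ContDiffOn ℝ 2 (uncurriedFvm f) Ω :=
    (((hf.of_le (by norm_num)).sqrt fun y hy => (hpos y hy).ne').mul hf₂₂).sub contDiffOn_const
  have hfx := hf.differentiableAt_of_isOpen hΩ (by simp) hx
  have hf₂₂x := hf₂₂.differentiableAt_of_isOpen hΩ (by simp) hx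
  have hFst : partialFst (uncurriedFvm f) x = partialFst f x / (2 * √(f x))
      * partialSnd (partialSnd f) x + √(f x) * partialFst (partialSnd (partialSnd f)) x :=
    partialFst_sqrt_mul_sub hfx hf₂₂x (hpos x hx).ne' 2
  have hSnd : partialSnd (uncurriedFvm f) x = partialSnd f x / (2 * √(f x))
      * partialSnd (partialSnd f) x + √(f x) * partialSnd (partialSnd (partialSnd f)) x :=
    partialSnd_sqrt_mul_sub hfx hf₂₂x (hpos x hx).ne' 2
  have hs_near : partialFst f =ᶠ[𝓝 x] _ := eventually_of_mem (hΩ.mem_nhds hx) hs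
  have hmixed : partialFst (partialSnd (partialSnd f)) x
      = -b x.1 * partialSnd (partialSnd f) x
        - 3 * b x.1 / 2 * (x.2 * partialSnd (partialSnd (partialSnd f)) x)
        + partialSnd (partialSnd (uncurriedFvm f)) x := by
    rw [partialFst_partialSnd_partialSnd_comm hΩ (hf.of_le (by norm_num)) hx,
      hs_near.partialSnd.partialSnd_eq, partialSnd_partialSnd_affine_partialSnd
        (fun s => 2 * b s) (fun s => -(3 * b s / 2)) hΩ (hf.of_le (by norm_num)) hF hx]
    ring
  have hq : 0 < √(f x) := Real.sqrt_pos.2 (hpos x hx)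
  have hsq : f x = √(f x) ^ 2 := (Real.sq_sqrt (hpos x hx).le).symm
  rw [hFst, hSnd, hmixed, hs x hx]
  simp only [uncurriedFvm]
  set q := √(f x)
  rw [hsq]
  field_simp
  ring

theorem F_equation_general
    (b : ℝ → ℝ)
    (Omega : Set (ℝ × ℝ)) (hOpen : IsOpen Omega)
    (W : ℝ → ℝ → ℝ)
    (hWpos : ∀ p ∈ Omega, 0 < W p.1 p.2)
    (hWreg : ContDiffOn ℝ 5 (Function.uncurry W) Omega)
    (heq : ∀ p ∈ Omega,
      deriv (fun σ => W σ p.2) p.1 - 2 * b p.1 * W p.1 p.2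
        + 3 * b p.1 / 2 * p.2 * deriv (W p.1) p.2
        - Real.sqrt (W p.1 p.2) * iteratedDeriv 2 (W p.1) p.2 = -2) :
    ∀ p ∈ Omega,
      deriv (fun σ => Fvm W σ p.2) p.1
        - 1 / (2 * W p.1 p.2) * Fvm W p.1 p.2 * (Fvm W p.1 p.2 + 2)
        + 3 * b p.1 / 2 * p.2 * deriv (Fvm W p.1) p.2
        - Real.sqrt (W p.1 p.2) * iteratedDeriv 2 (Fvm W p.1) p.2 = 0 := by
  have hs : ∀ x ∈ Omega, partialFst (Function.uncurry W) x
      = 2 * b x.1 * Function.uncurry W x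
        + -(3 * b x.1 / 2) * (x.2 * partialSnd (Function.uncurry W) x)
        + uncurriedFvm (Function.uncurry W) x := fun x hx => by
    show deriv (fun σ => W σ x.2) x.1 = 2 * b x.1 * W x.1 x.2
      + -(3 * b x.1 / 2) * (x.2 * deriv (W x.1) x.2)
      + (√(W x.1 x.2) * partialSnd (partialSnd (Function.uncurry W)) (x.1, x.2) - 2)
    rw [← iteratedDeriv_two_eq_partialSnd_partialSnd]
    linarith [heq x hx]
  intro p hp
  have hF := uncurriedFvm_equation (f := Function.uncurry W) hOpen hWpos
    (hWreg.of_le (by norm_num)) hs hp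
  rw [← uncurry_Fvm] at hF
  rw [iteratedDeriv_two_eq_partialSnd_partialSnd]
  exact hF

/-- If `W` solves the von Mises form of the rescaled Prandtl equation, then
`F = √W·∂_ψ²W - 2` solves `∂_sF - F(F+2)/(2W) + (3b/2)ψ∂_ψF - √W·∂_ψ²F = 0`. -/
theorem F_equation
    (I : Set ℝ) (hI : I.OrdConnected) (b : ℝ → ℝ) (hb : ContinuousOn b I)
    (Omega : Set (ℝ × ℝ)) (hOpen : IsOpen Omega) (hSub : Omega ⊆ I ×ˢ Ioi 0)
    (W : ℝ → ℝ → ℝ)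
    (hWpos : ∀ p ∈ Omega, 0 < W p.1 p.2)
    (hWreg : ContDiffOn ℝ 5 (Function.uncurry W) Omega)
    (heq : ∀ p ∈ Omega,
      deriv (fun σ => W σ p.2) p.1 - 2 * b p.1 * W p.1 p.2
        + 3 * b p.1 / 2 * p.2 * deriv (W p.1) p.2
        - Real.sqrt (W p.1 p.2) * iteratedDeriv 2 (W p.1) p.2 = -2) :
    ∀ p ∈ Omega,
      deriv (fun σ => Fvm W σ p.2) p.1
        - 1 / (2 * W p.1 p.2) * Fvm W p.1 p.2 * (Fvm W p.1 p.2 + 2)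
        + 3 * b p.1 / 2 * p.2 * deriv (Fvm W p.1) p.2
        - Real.sqrt (W p.1 p.2) * iteratedDeriv 2 (Fvm W p.1) p.2 = 0 :=
  F_equation_general b Omega hOpen W hWpos hWreg heq
end

section
/- Fix eps ∈ (0,1/50]. There exists a universal constant C̄ > 0 such that for all C_- ≥ C̄ and all A > 0 there exists S0 > 0 (depending on A, C_-, eps) with the following property. Let s1 > s0 ≥ S0 and let b, b̃ : [s0,s1] → (0,∞) with b̃ differentiable, b̃' = -b·b̃, (1-eps)/s ≤ b(s) ≤ (1+eps)/s and (1-2·eps)/s ≤ b̃(s) ≤ (1+2·eps)/s for all s ∈ [s0,s1]. Then the function W_-(s,ψ) := (6ψ)^{4/3}/4 - A·ψ^{7/3}·b̃(s)^{5/4} satisfies ∂_sW_- - 2b·W_- + (3b/2)·ψ·∂_ψW_- - √(W_-)·∂_ψ²W_- + 2 ≤ 0 at every point (s,ψ) with s ∈ [s0,s1], ψ ≥ C_-·b̃(s)^{-3/4} and W_-(s,ψ) > 0. -/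
open Set MeasureTheory Filter
open scoped Topology

/-- The subsolution `W_-(s,ψ) = (6ψ)^{4/3}/4 - A·ψ^{7/3}·b̃(s)^{5/4}`. -/
noncomputable def Wminus (A : ℝ) (btil : ℝ → ℝ) (s psi : ℝ) : ℝ :=
  (6 * psi) ^ ((4:ℝ)/3) / 4 - A * psi ^ ((7:ℝ)/3) * btil s ^ ((5:ℝ)/4)

private lemma rpow_pow_rpow (x : ℝ) (hx : 0 ≤ x) (p q : ℝ) (n : ℕ) (h : p * n = q) :
    (x^p)^n = x^q := by
  rw [← Real.rpow_natCast (x^p) n, ← Real.rpow_mul hx, h]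

private lemma rpow_pow_pow (x : ℝ) (hx : 0 ≤ x) (p : ℝ) (n m : ℕ) (h : p * n = (m:ℝ)) :
    (x^p)^n = x^m := by
  rw [← Real.rpow_natCast (x^p) n, ← Real.rpow_mul hx, h, Real.rpow_natCast]

private lemma rpow_pow_inv_pow (x : ℝ) (hx : 0 < x) (p : ℝ) (n m : ℕ) (h : p * n = -(m:ℝ)) :
    (x^p)^n = (x^m)⁻¹ := by
  rw [← Real.rpow_natCast (x^p) n, ← Real.rpow_mul hx.le, h, Real.rpow_neg hx.le,
    Real.rpow_natCast]


private lemma fact3 (psi : ℝ) (hψ : 0 < psi) :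
    psi^((1:ℝ)/3)*(6*psi)^((2:ℝ)/3) ≤ 4*psi := by
  have h6p : (0:ℝ) < 6*psi := by linarith
  apply le_of_pow_le_pow_left₀ (n := 3) (by norm_num) (by positivity)
  rw [mul_pow, rpow_pow_pow psi hψ.le ((1:ℝ)/3) 3 1 (by norm_num),
    rpow_pow_pow (6*psi) h6p.le ((2:ℝ)/3) 3 2 (by norm_num)]
  nlinarith [pow_pos hψ 3]

private lemma fact4 (psi : ℝ) (hψ : 0 < psi) :
    psi^((7:ℝ)/3) * ((6*psi)^(-(2:ℝ)/3))^2 ≤ psi := by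
  have h6p : (0:ℝ) < 6*psi := by linarith
  apply le_of_pow_le_pow_left₀ (n := 3) (by norm_num) hψ.le
  rw [mul_pow, ← pow_mul, rpow_pow_pow psi hψ.le ((7:ℝ)/3) 3 7 (by norm_num),
    rpow_pow_inv_pow (6*psi) h6p (-(2:ℝ)/3) (2*3) 4 (by norm_num)]
  have h64 : (0:ℝ) < (6*psi)^4 := by positivity
  have heq : psi^7 * ((6*psi)^4)⁻¹ = psi^7/(6*psi)^4 := by ring
  rw [heq, div_le_iff₀ h64]
  nlinarith [pow_pos hψ 7]

private lemma Wminus_core (A bs d r ψ L13 L23 Lm23 p13 p43 p73 : ℝ)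
    (hψ : 0 < ψ) (hA : 0 < A) (hd : 0 < d) (hp13 : 0 ≤ p13)
    (f1 : 6*ψ*L13 = L23^2)
    (f2 : L23*Lm23 = 1)
    (f3 : p13*L23 ≤ 4*ψ)
    (f4 : p73*Lm23^2 ≤ ψ)
    (f5 : ψ*p43 = p73)
    (hbp : 94 ≤ bs*p43)
    (hr0 : 0 ≤ r) (hr2 : r^2 = L23^2/4 - A*p73*d) (hrU : 2*r ≤ L23) :
    5/4*(A*bs*d*p73) - 2*bs*(L23^2/4 - A*p73*d) + 3*bs/2*ψ*(2*L13 - 7/3*A*p43*d)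
      - r*(4*Lm23 - 28/9*A*p13*d) + 2 ≤ 0 := by
  have s1 : 2*r^2 ≤ r*L23 := by nlinarith [mul_nonneg (sub_nonneg.2 hrU) hr0]
  have s2 : 2*r^2*Lm23^2 ≤ r*L23*Lm23^2 := by
    have := mul_le_mul_of_nonneg_right s1 (sq_nonneg Lm23); linarith
  have s3 : r*L23*Lm23^2 = r*Lm23 := by linear_combination r*Lm23*f2
  have s5 : 2*r^2*Lm23^2 = 1/2 - 2*A*d*(p73*Lm23^2) := by
    linear_combination 2*Lm23^2*hr2 + (L23*Lm23+1)/2*f2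
  have s6 : 2*A*d*(p73*Lm23^2) ≤ 2*A*d*ψ :=
    mul_le_mul_of_nonneg_left f4 (by positivity)
  have t3 : 1/2 - 2*A*d*ψ ≤ r*Lm23 := by linarith
  have t4 : r*(28/9*A*p13*d) ≤ 56/9*A*d*ψ := by
    have h1 := mul_le_mul_of_nonneg_left hrU (by positivity : (0:ℝ) ≤ 28/9*A*p13*d)
    have h2 := mul_le_mul_of_nonneg_left f3 (by positivity : (0:ℝ) ≤ 14/9*A*d)
    nlinarith [h1, h2]
  have t1 : bs*(6*ψ*L13) = bs*L23^2 := by rw [f1]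
  have t2 : A*d*(bs*(ψ*p43)) = A*d*(bs*p73) := by rw [f5]
  have t5 : 94*(A*d*ψ) ≤ bs*p43*(A*d*ψ) :=
    mul_le_mul_of_nonneg_right hbp (by positivity)
  nlinarith [t1, t2, t3, t4, t5, mul_nonneg (mul_nonneg hA.le hd.le) hψ.le]

/-- `W_-` is a subsolution of the von Mises form of the rescaled Prandtl equation on
the region `ψ ≥ C_-·b̃^{-3/4}`, `W_- > 0`. -/
theorem Wminus_subsolution :
    ∀ eps : ℝ, eps ∈ Ioc (0:ℝ) (1/50) →
      ∃ Cbar : ℝ, 0 < Cbar ∧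
        ∀ Cm : ℝ, Cbar ≤ Cm → ∀ A : ℝ, 0 < A →
          ∃ S0 : ℝ, 0 < S0 ∧
            ∀ s0 s1 : ℝ, S0 ≤ s0 → s0 < s1 →
              ∀ b btil : ℝ → ℝ,
                (∀ s ∈ Icc s0 s1, 0 < b s ∧ 0 < btil s) →
                (∀ s ∈ Icc s0 s1, HasDerivAt btil (-(b s * btil s)) s) →
                (∀ s ∈ Icc s0 s1, (1 - eps) / s ≤ b s ∧ b s ≤ (1 + eps) / s) →
                (∀ s ∈ Icc s0 s1, (1 - 2 * eps) / s ≤ btil s ∧ btil s ≤ (1 + 2 * eps) / s) →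
                ∀ s ∈ Icc s0 s1, ∀ psi : ℝ,
                  Cm * btil s ^ (-(3:ℝ)/4) ≤ psi →
                  0 < Wminus A btil s psi →
                  deriv (fun σ => Wminus A btil σ psi) s
                    - 2 * b s * Wminus A btil s psi
                    + 3 * b s / 2 * psi * deriv (Wminus A btil s) psi
                    - Real.sqrt (Wminus A btil s psi)
                      * iteratedDeriv 2 (Wminus A btil s) psi
                    + 2 ≤ 0 := by
  intro eps heps
  obtain ⟨heps0, heps1⟩ := heps
  refine ⟨100, by norm_num, ?_⟩
  intro Cm hCm A hA
  refine ⟨1, one_pos, ?_⟩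
  intro s0 s1 hS0 hs01 b btil hpos hderiv hbb hbt s hs psi hpsi hWpos
  obtain ⟨hbs, hcs⟩ := hpos s hs
  have hspos : 0 < s := lt_of_lt_of_le one_pos (le_trans hS0 hs.1)
  have hCmpos : (0:ℝ) < Cm := by linarith
  have hψ : 0 < psi := lt_of_lt_of_le (mul_pos hCmpos (Real.rpow_pos_of_pos hcs _)) hpsi
  have h6p : (0:ℝ) < 6*psi := by linarith
  -- ratio bound : 49 * btil s ≤ 52 * b s
  have hbc : 49*btil s ≤ 52*b s := by
    have hb1 := (hbb s hs).1
    have hc2 := (hbt s hs).2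
    have hnum : 49*(1+2*eps) ≤ 52*(1-eps) := by linarith
    have m1 := (le_div_iff₀ hspos).mp hc2
    have m2 := (div_le_iff₀ hspos).mp hb1
    have : 49*btil s*s ≤ 52*b s*s := by nlinarith [m1, m2]
    exact le_of_mul_le_mul_right this hspos
  -- lower bound on b s * psi^(4/3)
  have hp43pos : 0 < psi^((4:ℝ)/3) := Real.rpow_pos_of_pos hψ _
  have hstep : (Cm * btil s^(-(3:ℝ)/4))^((4:ℝ)/3) ≤ psi^((4:ℝ)/3) :=
    Real.rpow_le_rpow (by positivity) hpsi (by norm_num)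
  have hsplit : (Cm * btil s^(-(3:ℝ)/4))^((4:ℝ)/3) = Cm^((4:ℝ)/3) * (btil s)⁻¹ := by
    rw [Real.mul_rpow hCmpos.le (Real.rpow_nonneg hcs.le _), ← Real.rpow_mul hcs.le,
      show (-(3:ℝ)/4)*((4:ℝ)/3) = -1 by norm_num, Real.rpow_neg_one]
  have hCm43 : (100:ℝ) ≤ Cm^((4:ℝ)/3) := by
    have h1 : (100:ℝ)^((1:ℝ)) ≤ (100:ℝ)^((4:ℝ)/3) :=
      Real.rpow_le_rpow_of_exponent_le (by norm_num) (by norm_num)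
    have h2 : (100:ℝ)^((4:ℝ)/3) ≤ Cm^((4:ℝ)/3) :=
      Real.rpow_le_rpow (by norm_num) hCm (by norm_num)
    rw [Real.rpow_one] at h1; linarith
  have hinv : (0:ℝ) ≤ (btil s)⁻¹ := by positivity
  have h100 : 100*(btil s)⁻¹ ≤ psi^((4:ℝ)/3) := by
    calc (100:ℝ)*(btil s)⁻¹ ≤ Cm^((4:ℝ)/3)*(btil s)⁻¹ :=
          mul_le_mul_of_nonneg_right hCm43 hinv
      _ = (Cm * btil s^(-(3:ℝ)/4))^((4:ℝ)/3) := hsplit.symm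
      _ ≤ psi^((4:ℝ)/3) := hstep
  have h100' : (100:ℝ) ≤ psi^((4:ℝ)/3)*btil s := by
    have h := mul_le_mul_of_nonneg_right h100 hcs.le
    rw [mul_assoc, inv_mul_cancel₀ hcs.ne', mul_one] at h
    linarith
  have hbp : 94 ≤ b s * psi^((4:ℝ)/3) := by
    have h2 : psi^((4:ℝ)/3)*(49*btil s) ≤ psi^((4:ℝ)/3)*(52*b s) :=
      mul_le_mul_of_nonneg_left hbc hp43pos.le
    nlinarith [h100', h2]
  -- derivative in s
  have hbtd := hderiv s hs
  have h5 : HasDerivAt (fun σ => btil σ ^ ((5:ℝ)/4))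
      (-(b s * btil s) * ((5:ℝ)/4) * btil s ^ ((5:ℝ)/4 - 1)) s :=
    hbtd.rpow_const (Or.inr (by norm_num))
  have hWs : HasDerivAt (fun σ => Wminus A btil σ psi)
      (0 - A * psi ^ ((7:ℝ)/3) * (-(b s * btil s) * ((5:ℝ)/4) * btil s ^ ((5:ℝ)/4 - 1))) s :=
    (hasDerivAt_const s ((6 * psi) ^ ((4:ℝ)/3) / 4)).sub (h5.const_mul (A * psi ^ ((7:ℝ)/3)))
  have hds : deriv (fun σ => Wminus A btil σ psi) s
      = 5/4*(A*b s*btil s^((5:ℝ)/4)*psi^((7:ℝ)/3)) := by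
    rw [hWs.deriv, show ((5:ℝ)/4 - 1) = (1:ℝ)/4 by norm_num]
    have hc14 : btil s ^ ((1:ℝ)/4) * btil s = btil s ^ ((5:ℝ)/4) := by
      rw [show (5:ℝ)/4 = 1/4 + 1 by norm_num, Real.rpow_add_one hcs.ne']
    linear_combination (5/4 : ℝ)*A*psi^((7:ℝ)/3)*b s*hc14
  -- derivative in psi
  have hWpsi : ∀ x : ℝ, 0 < x → HasDerivAt (Wminus A btil s)
      (2*(6*x)^((1:ℝ)/3) - 7/3*A*x^((4:ℝ)/3)*btil s^((5:ℝ)/4)) x := by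
    intro x hx
    have h6x : (0:ℝ) < 6*x := by linarith
    have h0 : HasDerivAt (fun y : ℝ => 6*y) 6 x := by
      simpa using (hasDerivAt_id x).const_mul (6:ℝ)
    have h1 := (h0.rpow_const (p := (4:ℝ)/3) (Or.inl h6x.ne')).div_const 4
    have h2 := ((Real.hasDerivAt_rpow_const (p := (7:ℝ)/3) (Or.inl hx.ne')).const_mul A).mul_const
      (btil s^((5:ℝ)/4))
    have h3 := h1.sub h2
    rw [show (4:ℝ)/3 - 1 = (1:ℝ)/3 by norm_num, show (7:ℝ)/3 - 1 = (4:ℝ)/3 by norm_num] at h3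
    have hval : 2*(6*x)^((1:ℝ)/3) - 7/3*A*x^((4:ℝ)/3)*btil s^((5:ℝ)/4)
        = 6 * ((4:ℝ)/3) * (6*x) ^ ((1:ℝ)/3) / 4
          - A * ((7:ℝ)/3 * x ^ ((4:ℝ)/3)) * btil s^((5:ℝ)/4) := by ring
    rw [hval]
    exact h3
  have hdp : deriv (Wminus A btil s) psi
      = 2*(6*psi)^((1:ℝ)/3) - 7/3*A*psi^((4:ℝ)/3)*btil s^((5:ℝ)/4) := (hWpsi psi hψ).deriv
  have hev : deriv (Wminus A btil s)
      =ᶠ[𝓝 psi] (fun x => 2*(6*x)^((1:ℝ)/3) - 7/3*A*x^((4:ℝ)/3)*btil s^((5:ℝ)/4)) := by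
    filter_upwards [Ioi_mem_nhds hψ] with x hx
    exact (hWpsi x hx).deriv
  have hd2 : iteratedDeriv 2 (Wminus A btil s) psi
      = 4*(6*psi)^(-(2:ℝ)/3) - 28/9*A*psi^((1:ℝ)/3)*btil s^((5:ℝ)/4) := by
    show iteratedDeriv (1+1) (Wminus A btil s) psi = _
    rw [iteratedDeriv_succ, iteratedDeriv_one, hev.deriv_eq]
    have h0 : HasDerivAt (fun y : ℝ => 6*y) 6 psi := by
      simpa using (hasDerivAt_id psi).const_mul (6:ℝ)
    have h1 := (h0.rpow_const (p := (1:ℝ)/3) (Or.inl h6p.ne')).const_mul (2:ℝ)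
    have h2 := ((Real.hasDerivAt_rpow_const (p := (4:ℝ)/3) (Or.inl hψ.ne')).const_mul
      ((7:ℝ)/3*A)).mul_const (btil s^((5:ℝ)/4))
    have h3 := h1.sub h2
    rw [show (1:ℝ)/3 - 1 = -(2:ℝ)/3 by norm_num, show (4:ℝ)/3 - 1 = (1:ℝ)/3 by norm_num] at h3
    have hval : 4*(6*psi)^(-(2:ℝ)/3) - 28/9*A*psi^((1:ℝ)/3)*btil s^((5:ℝ)/4)
        = 2 * (6 * ((1:ℝ)/3) * (6*psi) ^ (-(2:ℝ)/3))
          - (7:ℝ)/3*A * ((4:ℝ)/3 * psi ^ ((1:ℝ)/3)) * btil s^((5:ℝ)/4) := by ring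
    rw [hval]
    exact h3.deriv
  -- unfold Wminus, with (6ψ)^{4/3} = ((6ψ)^{2/3})^2
  have e43 : (6*psi)^((4:ℝ)/3) = ((6*psi)^((2:ℝ)/3))^2 :=
    (rpow_pow_rpow (6*psi) h6p.le ((2:ℝ)/3) ((4:ℝ)/3) 2 (by norm_num)).symm
  have hWuf : Wminus A btil s psi
      = ((6*psi)^((2:ℝ)/3))^2/4 - A*psi^((7:ℝ)/3)*btil s^((5:ℝ)/4) := by
    unfold Wminus
    rw [e43]
  -- rpow facts
  have f1 : 6*psi*(6*psi)^((1:ℝ)/3) = ((6*psi)^((2:ℝ)/3))^2 := by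
    rw [← e43, show (4:ℝ)/3 = 1/3 + 1 by norm_num, Real.rpow_add_one h6p.ne']
    ring
  have f2 : (6*psi)^((2:ℝ)/3) * (6*psi)^(-(2:ℝ)/3) = 1 := by
    rw [← Real.rpow_add h6p, show (2:ℝ)/3 + -(2:ℝ)/3 = 0 by norm_num, Real.rpow_zero]
  have f3 := fact3 psi hψ
  have f4 := fact4 psi hψ
  have f5 : psi * psi^((4:ℝ)/3) = psi^((7:ℝ)/3) := by
    rw [show (7:ℝ)/3 = 4/3 + 1 by norm_num, Real.rpow_add_one hψ.ne']
    ring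
  -- sqrt facts
  have hM : 0 < A*psi^((7:ℝ)/3)*btil s^((5:ℝ)/4) :=
    mul_pos (mul_pos hA (Real.rpow_pos_of_pos hψ _)) (Real.rpow_pos_of_pos hcs _)
  have hWpos' : 0 < ((6*psi)^((2:ℝ)/3))^2/4 - A*psi^((7:ℝ)/3)*btil s^((5:ℝ)/4) :=
    hWuf ▸ hWpos
  have hL23 : (0:ℝ) ≤ (6*psi)^((2:ℝ)/3) := Real.rpow_nonneg h6p.le _
  have hr0 : 0 ≤ Real.sqrt (((6*psi)^((2:ℝ)/3))^2/4 - A*psi^((7:ℝ)/3)*btil s^((5:ℝ)/4)) :=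
    Real.sqrt_nonneg _
  have hr2 : (Real.sqrt (((6*psi)^((2:ℝ)/3))^2/4 - A*psi^((7:ℝ)/3)*btil s^((5:ℝ)/4)))^2
      = ((6*psi)^((2:ℝ)/3))^2/4 - A*psi^((7:ℝ)/3)*btil s^((5:ℝ)/4) :=
    Real.sq_sqrt hWpos'.le
  have hrU : 2*Real.sqrt (((6*psi)^((2:ℝ)/3))^2/4 - A*psi^((7:ℝ)/3)*btil s^((5:ℝ)/4))
      ≤ (6*psi)^((2:ℝ)/3) := by
    have h1 : Real.sqrt (((6*psi)^((2:ℝ)/3))^2/4 - A*psi^((7:ℝ)/3)*btil s^((5:ℝ)/4))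
        ≤ Real.sqrt (((6*psi)^((2:ℝ)/3))^2/4) := Real.sqrt_le_sqrt (by linarith)
    have h2 : Real.sqrt (((6*psi)^((2:ℝ)/3))^2/4) = (6*psi)^((2:ℝ)/3)/2 := by
      rw [show ((6*psi)^((2:ℝ)/3))^2/4 = ((6*psi)^((2:ℝ)/3)/2)^2 by ring,
        Real.sqrt_sq (by positivity)]
    rw [h2] at h1
    linarith
  -- assemble
  rw [hds, hdp, hd2, hWuf]
  exact Wminus_core A (b s) (btil s^((5:ℝ)/4)) _ psi ((6*psi)^((1:ℝ)/3)) ((6*psi)^((2:ℝ)/3))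
    ((6*psi)^(-(2:ℝ)/3)) (psi^((1:ℝ)/3)) (psi^((4:ℝ)/3)) (psi^((7:ℝ)/3))
    hψ hA (Real.rpow_pos_of_pos hcs _) (Real.rpow_nonneg hψ.le _)
    f1 f2 f3 f4 f5 hbp hr0 hr2 hrU
end
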